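/- arXiv:1303.4073 — 7 statements merged into one kernel-verified Lean document; each statement's English description precedes it below -/
import Mathlib

section
/- If D is a dual hyperoval of rank n over F_2 whose members are all totally singular with respect to a quadratic form of plus type on a 2n-dimensional F_2-space, then n is odd. -/
/-!
For totally singular `n`-spaces `A`, `B`, `C` of a `2n`-dimensional quadratic space with
nondegenerate polar form, `dim (A ⊓ B) + dim (B ⊓ C) + dim (C ⊓ A) ≡ n (mod 2)`; this is the
parity form of the two-class theorem. Three members of the dual hyperoval meet pairwise in
dimension `1`, so `n ≡ 3 (mod 2)`.

The parity is proved by moving `B` towards `A` through adjacent subspaces (meeting in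
dimension `n - 1`). If `F`, `F'` are adjacent, the singular vectors of
`F ⊔ F' = (F ⊓ F')ᗮ` all lie in `F ∪ F'`, so a totally singular `Z` meets `F ⊔ F'` inside `F`
or inside `F'`; as `dim (Z ⊓ (F ⊔ F')) = dim (Z ⊓ F ⊓ F') + 1`, the sum
`dim (Z ⊓ F) + dim (Z ⊓ F')` is odd.
-/

open Module Submodule

namespace LinearMap.BilinForm

variable {R M : Type*} [CommRing R] [AddCommGroup M] [Module R M]

lemma orthogonal_sup (B : LinearMap.BilinForm R M) (p q : Submodule R M) :
    B.orthogonal (p ⊔ q) = B.orthogonal p ⊓ B.orthogonal q :=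
  le_antisymm (le_inf (orthogonal_le le_sup_left) (orthogonal_le le_sup_right))
    fun x hx y hy => by
      obtain ⟨a, ha, b, hb, rfl⟩ := mem_sup.mp hy
      rw [map_add, LinearMap.add_apply, hx.1 a ha, hx.2 b hb, add_zero]

end LinearMap.BilinForm

namespace QuadraticMap

open LinearMap.BilinForm

section CommRing

variable {R M : Type*} [CommRing R] [AddCommGroup M] [Module R M] {Q : QuadraticForm R M}

variable (Q) in
def IsTotallySingular (X : Submodule R M) : Prop := ∀ x ∈ X, Q x = 0

variable {X Y : Submodule R M}

lemma IsTotallySingular.polar_eq_zero (hX : Q.IsTotallySingular X) {x y : M} (hx : x ∈ X)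
    (hy : y ∈ X) : polar Q x y = 0 := by
  simp [polar, hX _ (add_mem hx hy), hX x hx, hX y hy]

lemma IsTotallySingular.mono (hX : Q.IsTotallySingular X) (hYX : Y ≤ X) :
    Q.IsTotallySingular Y := fun y hy => hX y (hYX hy)

lemma IsTotallySingular.le_orthogonal (hX : Q.IsTotallySingular X) (hYX : Y ≤ X) :
    X ≤ orthogonal Q.polarBilin Y := fun _ hx _ hy => hX.polar_eq_zero (hYX hy) hx

lemma IsTotallySingular.sup (hX : Q.IsTotallySingular X) (hY : Q.IsTotallySingular Y)
    (hXY : X ≤ orthogonal Q.polarBilin Y) : Q.IsTotallySingular (X ⊔ Y) := by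
  intro z hz
  obtain ⟨x, hx, y, hy, rfl⟩ := mem_sup.mp hz
  have hpolar : polar Q x y = 0 := polar_comm Q y x ▸ hXY hx y hy
  rw [polar, hX x hx, hY y hy] at hpolar
  simpa using hpolar

lemma isTotallySingular_span_singleton {v : M} (hv : Q v = 0) :
    Q.IsTotallySingular (R ∙ v) := fun x hx => by
  obtain ⟨c, rfl⟩ := mem_span_singleton.mp hx
  rw [QuadraticMap.map_smul, hv, smul_zero]

end CommRing

section Field

variable {K V : Type*} [Field K] [AddCommGroup V] [Module K V] [FiniteDimensional K V]
  {Q : QuadraticForm K V} {n : ℕ}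
  (hdim : finrank K V = 2 * n) (hnd : (Q.polarBilin : LinearMap.BilinForm K V).Nondegenerate)

include hdim hnd

lemma finrank_orthogonal_polarBilin (U : Submodule K V) :
    finrank K (orthogonal Q.polarBilin U) = 2 * n - finrank K U := by
  rw [finrank_orthogonal hnd, hdim]

variable {X : Submodule K V}

lemma IsTotallySingular.finrank_le (hX : Q.IsTotallySingular X) : finrank K X ≤ n := by
  have := finrank_mono (hX.le_orthogonal le_rfl)
  rw [finrank_orthogonal_polarBilin hdim hnd] at this
  omega

lemma IsTotallySingular.orthogonal_eq_self (hX : Q.IsTotallySingular X) (hXn : finrank K X = n) :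
    orthogonal Q.polarBilin X = X :=
  (eq_of_le_of_finrank_le (hX.le_orthogonal le_rfl)
    (by rw [finrank_orthogonal_polarBilin hdim hnd, hXn]; omega)).symm

section Adjacent

variable {F F' Z : Submodule K V} (hF : Q.IsTotallySingular F) (hFn : finrank K F = n)
  (hF' : Q.IsTotallySingular F') (hF'n : finrank K F' = n) (hFF' : finrank K ↥(F ⊓ F') + 1 = n)

include hF hFn hF' hF'n hFF'

lemma sup_eq_orthogonal_inf_of_adjacent : F ⊔ F' = orthogonal Q.polarBilin (F ⊓ F') := by
  refine eq_of_le_of_finrank_le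
    (sup_le (hF.le_orthogonal inf_le_left) (hF'.le_orthogonal inf_le_right)) ?_
  have := finrank_sup_add_finrank_inf_eq F F'
  rw [finrank_orthogonal_polarBilin hdim hnd]
  omega

lemma mem_or_mem_of_adjacent {m : V} (hm : m ∈ F ⊔ F') (hQm : Q m = 0) : m ∈ F ∨ m ∈ F' := by
  obtain ⟨f, hf, f', hf', rfl⟩ := mem_sup.mp hm
  by_cases hfF' : f ∈ F'
  · exact .inr (add_mem hfF' hf')
  refine .inl (add_mem hf ?_)
  have hspan : K ∙ f ⊔ F ⊓ F' = F := by
    refine eq_of_le_of_finrank_le (sup_le ((span_singleton_le_iff_mem f F).mpr hf) inf_le_left) ?_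
    have hlt : F ⊓ F' < K ∙ f ⊔ F ⊓ F' :=
      right_lt_sup.mpr fun h => hfF' (h (mem_span_singleton_self f)).2
    have := finrank_lt_finrank_of_lt hlt
    omega
  have hff' : polar Q f f' = 0 := by
    rw [polar, hQm, hF f hf, hF' f' hf']
    simp
  rw [← hF.orthogonal_eq_self hdim hnd hFn, ← hspan, orthogonal_sup,
    orthogonal_span_singleton_eq_toLin_ker]
  exact ⟨hff', fun x hx => hF'.polar_eq_zero hx.2 hf'⟩

lemma finrank_inf_sup_of_adjacent (hZ : Q.IsTotallySingular Z) (hZn : finrank K Z = n) :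
    finrank K ↥(Z ⊓ (F ⊔ F')) = finrank K ↥(Z ⊓ (F ⊓ F')) + 1 := by
  have hZ_sup : Z ⊓ (F ⊔ F') = orthogonal Q.polarBilin (Z ⊔ F ⊓ F') := by
    rw [orthogonal_sup, hZ.orthogonal_eq_self hdim hnd hZn,
      sup_eq_orthogonal_inf_of_adjacent hdim hnd hF hFn hF' hF'n hFF']
  rw [hZ_sup, finrank_orthogonal_polarBilin hdim hnd]
  have := finrank_sup_add_finrank_inf_eq Z (F ⊓ F')
  have := finrank_mono (inf_le_right : Z ⊓ (F ⊓ F') ≤ F ⊓ F')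
  omega

lemma odd_finrank_inf_add_finrank_inf_of_adjacent (hZ : Q.IsTotallySingular Z)
    (hZn : finrank K Z = n) : Odd (finrank K ↥(Z ⊓ F) + finrank K ↥(Z ⊓ F')) := by
  wlog hZF : Z ⊓ (F ⊔ F') ≤ F generalizing F F'
  · have hZF' : Z ⊓ (F ⊔ F') ≤ F' := by
      refine (AddSubgroupClass.subset_union.mp fun m hm => ?_).resolve_left hZF
      exact mem_or_mem_of_adjacent hdim hnd hF hFn hF' hF'n hFF' hm.2 (hZ m hm.1)
    rw [add_comm]
    exact this hF' hF'n hF hFn (by rwa [inf_comm]) (by rwa [sup_comm])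
  have hZ_inf : Z ⊓ F' = Z ⊓ (F ⊓ F') :=
    le_antisymm (fun x hx => ⟨hx.1, hZF ⟨hx.1, mem_sup_right hx.2⟩, hx.2⟩)
      (inf_le_inf_left Z inf_le_right)
  rw [le_antisymm (inf_le_inf_left Z le_sup_left) (le_inf inf_le_left hZF), hZ_inf,
    finrank_inf_sup_of_adjacent hdim hnd hF hFn hF' hF'n hFF' hZ hZn]
  exact ⟨_, by ring⟩

end Adjacent

lemma exists_adjacent_finrank_inf_lt {A B : Submodule K V} (hA : Q.IsTotallySingular A)
    (hAn : finrank K A = n) (hB : Q.IsTotallySingular B) (hBn : finrank K B = n) (hAB : A ≠ B) :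
    ∃ C, Q.IsTotallySingular C ∧ finrank K C = n ∧ finrank K ↥(B ⊓ C) + 1 = n ∧
      finrank K ↥(A ⊓ B) < finrank K ↥(A ⊓ C) := by
  obtain ⟨v, hvA, hvB⟩ : ∃ v ∈ A, v ∉ B := SetLike.not_le_iff_exists.mp fun h =>
    hAB (eq_of_le_of_finrank_le h (by rw [hAn, hBn]))
  have hv : v ≠ 0 := fun h => hvB (h ▸ zero_mem B)
  have hHB : B ⊓ orthogonal Q.polarBilin (K ∙ v) < B := inf_lt_left.mpr fun hB_le => hvB <| by
    rw [← hB.orthogonal_eq_self hdim hnd hBn]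
    exact fun b hb => (polar_comm Q b v).trans (hB_le hb v (mem_span_singleton_self v))
  have hHn : finrank K ↥(B ⊓ orthogonal Q.polarBilin (K ∙ v)) + 1 = n := by
    have := finrank_lt_finrank_of_lt hHB
    have := finrank_sup_add_finrank_inf_eq B (orthogonal Q.polarBilin (K ∙ v))
    have := finrank_le (B ⊔ orthogonal Q.polarBilin (K ∙ v))
    have := finrank_orthogonal_polarBilin hdim hnd (K ∙ v)
    rw [finrank_span_singleton hv] at this
    omega
  set H := B ⊓ orthogonal Q.polarBilin (K ∙ v)
  set C := H ⊔ K ∙ v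
  have hvC : v ∈ C := mem_sup_right (mem_span_singleton_self v)
  have hC : Q.IsTotallySingular C :=
    (hB.mono inf_le_left).sup (isTotallySingular_span_singleton (hA v hvA)) inf_le_right
  have hCn : finrank K C = n := by
    have hHC : H < C := left_lt_sup.mpr fun h => hvB (h (mem_span_singleton_self v)).1
    have := finrank_lt_finrank_of_lt hHC
    have := hC.finrank_le hdim hnd
    omega
  refine ⟨C, hC, hCn, ?_, ?_⟩
  · have := finrank_mono (le_inf inf_le_left le_sup_left : H ≤ B ⊓ C)
    have := finrank_lt_finrank_of_lt (inf_lt_right.mpr fun h => hvB (h hvC) : B ⊓ C < C)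
    omega
  · have hAB_le : A ⊓ B ≤ A ⊓ C := fun x hx =>
      ⟨hx.1, mem_sup_left ⟨hx.2, hA.le_orthogonal ((span_singleton_le_iff_mem v A).mpr hvA) hx.1⟩⟩
    have hvAC : v ∈ A ⊓ C := ⟨hvA, hvC⟩
    exact finrank_lt_finrank_of_lt
      (SetLike.lt_iff_le_and_exists.mpr ⟨hAB_le, v, hvAC, fun h => hvB h.2⟩)

theorem even_finrank_inf_add_finrank_inf_add_finrank_inf {A B C : Submodule K V}
    (hA : Q.IsTotallySingular A) (hAn : finrank K A = n) (hB : Q.IsTotallySingular B)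
    (hBn : finrank K B = n) (hC : Q.IsTotallySingular C) (hCn : finrank K C = n) :
    Even (finrank K ↥(A ⊓ B) + finrank K ↥(B ⊓ C) + finrank K ↥(C ⊓ A) + n) := by
  induction hk : n - finrank K ↥(A ⊓ B) using Nat.strong_induction_on generalizing B with
  | _ k ih =>
    by_cases hAB : A = B
    · subst hAB
      rw [inf_idem, hAn, inf_comm]
      exact ⟨n + finrank K ↥(C ⊓ A), by ring⟩
    obtain ⟨B', hB', hB'n, hBB', hAB'⟩ := exists_adjacent_finrank_inf_lt hdim hnd hA hAn hB hBn hAB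
    have hAB'_le := finrank_mono (inf_le_left : A ⊓ B' ≤ A)
    have hAB'C := ih _ (by omega) hB' hB'n rfl
    have hA_odd := odd_finrank_inf_add_finrank_inf_of_adjacent hdim hnd hB hBn hB' hB'n hBB' hA hAn
    have hC_odd := odd_finrank_inf_add_finrank_inf_of_adjacent hdim hnd hB hBn hB' hB'n hBB' hC hCn
    rw [inf_comm C B, inf_comm C B'] at hC_odd
    rw [Nat.even_iff] at hAB'C ⊢
    rw [Nat.odd_iff] at hA_odd hC_odd
    omega

end Field

end QuadraticMap

theorem orthogonal_DHO_rank_odd_general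
    (n : ℕ) (hn : 2 < n)
    (V : Type*) [AddCommGroup V] [Module (ZMod 2) V] [FiniteDimensional (ZMod 2) V]
    (hdim : Module.finrank (ZMod 2) V = 2 * n)
    (Q : QuadraticForm (ZMod 2) V)
    (hnd : (QuadraticMap.polarBilin Q).Nondegenerate)
    (D : Set (Submodule (ZMod 2) V))
    (hcard : D.ncard = 2 ^ n)
    (hmem : ∀ X ∈ D, Module.finrank (ZMod 2) X = n ∧ ∀ x ∈ X, Q x = 0)
    (h2 : ∀ X₁ ∈ D, ∀ X₂ ∈ D, X₁ ≠ X₂ →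
      Module.finrank (ZMod 2) (X₁ ⊓ X₂ : Submodule (ZMod 2) V) = 1) :
    Odd n := by
  have hD : 2 < D.ncard := calc
    2 < 2 ^ 2 := by norm_num
    _ ≤ 2 ^ n := Nat.pow_le_pow_right two_pos hn.le
    _ = D.ncard := hcard.symm
  obtain ⟨A, hA, B, hB, C, hC, hAB, hAC, hBC⟩ :=
    (Set.two_lt_ncard (Set.finite_of_ncard_pos (by omega))).mp hD
  have := QuadraticMap.even_finrank_inf_add_finrank_inf_add_finrank_inf hdim hnd
    (hmem A hA).2 (hmem A hA).1 (hmem B hB).2 (hmem B hB).1 (hmem C hC).2 (hmem C hC).1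
  rw [h2 A hA B hB hAB, h2 B hB C hC hBC, h2 C hC A hA hAC.symm] at this
  rw [Nat.even_iff] at this
  rw [Nat.odd_iff]
  omega

/-- If a dual hyperoval of rank `n` over `F₂` has all members totally singular
with respect to a plus-type quadratic form on a `2n`-dimensional space, then
`n` is odd. -/
theorem orthogonal_DHO_rank_odd
    (n : ℕ) (hn : 2 < n)
    (V : Type*) [AddCommGroup V] [Module (ZMod 2) V] [FiniteDimensional (ZMod 2) V]
    (hdim : Module.finrank (ZMod 2) V = 2 * n)
    (Q : QuadraticForm (ZMod 2) V)
    (hnd : (QuadraticMap.polarBilin Q).Nondegenerate)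
    -- plus type: Witt index `n`, witnessed by a totally singular `n`-space
    (W : Submodule (ZMod 2) V)
    (hW : Module.finrank (ZMod 2) W = n ∧ ∀ x ∈ W, Q x = 0)
    (D : Set (Submodule (ZMod 2) V))
    (hcard : D.ncard = 2 ^ n)
    (hmem : ∀ X ∈ D, Module.finrank (ZMod 2) X = n ∧ ∀ x ∈ X, Q x = 0)
    (hspan : sSup D = ⊤)
    (h2 : ∀ X₁ ∈ D, ∀ X₂ ∈ D, X₁ ≠ X₂ →
      Module.finrank (ZMod 2) (X₁ ⊓ X₂ : Submodule (ZMod 2) V) = 1)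
    (h3 : ∀ X₁ ∈ D, ∀ X₂ ∈ D, ∀ X₃ ∈ D,
      X₁ ≠ X₂ → X₁ ≠ X₃ → X₂ ≠ X₃ → X₁ ⊓ X₂ ⊓ X₃ = ⊥) :
    Odd n :=
  orthogonal_DHO_rank_odd_general n hn V hdim Q hnd D hcard hmem h2
end

section
/- Let U be an F_q-space of finite dimension with q even and b a nondegenerate symmetric bilinear form. For every self-adjoint operator T on U there exists a unique self-adjoint operator R = E_{a,a} of rank at most 1 such that T + R is skew-symmetric (i.e., b(x, x(T+R)) = 0 for all x). Moreover b(x, xT) = b(x,a)^2 for all x ∈ U. -/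
/-- The rank-one operator `x ↦ b(x,a) • c`. -/
def Eop {F U : Type*} [Field F] [AddCommGroup U] [Module F U]
    (B : LinearMap.BilinForm F U) (a c : U) : U →ₗ[F] U :=
  (B.flip a).smulRight c

/-- `T` is self-adjoint with respect to `B`. -/
def IsSelfAdjOp {F U : Type*} [Field F] [AddCommGroup U] [Module F U]
    (B : LinearMap.BilinForm F U) (T : U →ₗ[F] U) : Prop :=
  ∀ x y : U, B (T x) y = B x (T y)

/-- `T` is skew-symmetric (alternating) with respect to `B`. -/
def IsSkewOp {F U : Type*} [Field F] [AddCommGroup U] [Module F U]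
    (B : LinearMap.BilinForm F U) (T : U →ₗ[F] U) : Prop :=
  ∀ x : U, B x (T x) = 0

/-!
In characteristic 2 the cross terms `B x (T y) + B y (T x) = 2 B x (T y)` of `q x = B x (T x)`
cancel for self-adjoint `T`, so `q` is additive with `q (c • x) = c ^ 2 * q x`: it is
Frobenius-semilinear. Since `F` is finite it is perfect, so composing `q` with the inverse of
Frobenius gives a linear functional, which the nondegenerate form represents as `x ↦ B x a`;
hence `q x = B x a ^ 2` and `T + E_{a,a}` is alternating. Conversely, a self-adjoint operator
of rank at most one is `λ E_{c,c} = E_{μc,μc}` with `μ ^ 2 = λ`, and if `T + E_{d,d}` is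
alternating
then `B x d ^ 2 = B x a ^ 2` for all `x`, so `d = a` because squaring is injective.
-/

open Module LinearMap.BilinForm

section Eop

variable {F U : Type*} [Field F] [AddCommGroup U] [Module F U] (B : LinearMap.BilinForm F U)

theorem Eop_apply (a c x : U) : Eop B a c x = B x a • c := rfl

theorem apply_Eop_self (a x : U) : B x (Eop B a a x) = B x a ^ 2 := by
  rw [Eop_apply, map_smul, smul_eq_mul, sq]

theorem Eop_smul_smul (μ : F) (c : U) : Eop B (μ • c) (μ • c) = μ ^ 2 • Eop B c c := by
  ext x
  simp only [Eop_apply, LinearMap.smul_apply, map_smul, smul_eq_mul, smul_smul]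
  ring_nf

theorem finrank_range_Eop_le_one (a c : U) : finrank F (LinearMap.range (Eop B a c)) ≤ 1 := by
  have hle : LinearMap.range (Eop B a c) ≤ Submodule.span F {c} := by
    rintro _ ⟨x, rfl⟩
    exact Submodule.smul_mem _ _ (Submodule.mem_span_singleton_self c)
  exact (Submodule.finrank_mono hle).trans ((finrank_span_le_card _).trans (by simp))

end Eop

section SelfAdjoint

variable {F U : Type*} [Field F] [AddCommGroup U] [Module F U] [FiniteDimensional F U]
  {B : LinearMap.BilinForm F U} {R : U →ₗ[F] U}

theorem IsSelfAdjOp.exists_eq_smul_Eop (hR : IsSelfAdjOp B R) (hB : B.Nondegenerate)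
    (hrank : finrank F (LinearMap.range R) ≤ 1) : ∃ (l : F) (c : U), R = l • Eop B c c := by
  obtain ⟨v, hv⟩ := finrank_le_one_iff.mp hrank
  choose k hk using fun x => hv ⟨R x, LinearMap.mem_range_self R x⟩
  set c : U := ↑v
  replace hk : ∀ x, R x = k x • c := fun x => (congrArg Subtype.val (hk x)).symm
  by_cases hc0 : c = 0
  · exact ⟨0, c, by ext x; simp [hk, hc0]⟩
  obtain ⟨y, hy⟩ : ∃ y, B c y ≠ 0 := by
    by_contra! h
    exact hc0 (hB.1 c h)
  refine ⟨k y / B c y, c, LinearMap.ext fun x => ?_⟩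
  have hadj : k x * B c y = k y * B x c := by
    simpa only [hk, map_smul, LinearMap.smul_apply, smul_eq_mul] using hR x y
  rw [hk, LinearMap.smul_apply, Eop_apply, smul_smul]
  congr 1
  field_simp
  linear_combination hadj

end SelfAdjoint

section CharTwo

variable {F U : Type*} [Field F] [CharP F 2] [AddCommGroup U] [Module F U]
  {B : LinearMap.BilinForm F U}

theorem IsSelfAdjOp.exists_eq_Eop [PerfectRing F 2] [FiniteDimensional F U] {R : U →ₗ[F] U}
    (hR : IsSelfAdjOp B R) (hB : B.Nondegenerate) (hrank : finrank F (LinearMap.range R) ≤ 1) :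
    ∃ d : U, R = Eop B d d := by
  obtain ⟨l, c, rfl⟩ := hR.exists_eq_smul_Eop hB hrank
  obtain ⟨μ, rfl⟩ := surjective_frobenius F 2 l
  exact ⟨μ • c, by rw [Eop_smul_smul, frobenius_def]⟩

def IsSelfAdjOp.frobeniusSemilinearForm {T : U →ₗ[F] U} (hT : IsSelfAdjOp B T)
    (hsymm : B.IsSymm) : U →ₛₗ[frobenius F 2] F where
  toFun x := B x (T x)
  map_add' x y := by
    have hcross : B y (T x) = B x (T y) := by rw [← hT, ← hsymm.eq]
    simp only [map_add, LinearMap.add_apply, hcross]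
    linear_combination CharTwo.add_self_eq_zero (B x (T y))
  map_smul' c x := by
    simp only [map_smul, LinearMap.smul_apply, smul_eq_mul, frobenius_def]
    ring

theorem LinearMap.BilinForm.eq_of_forall_apply_sq_eq (hB : B.Nondegenerate)
    {a d : U} (h : ∀ x, B x a ^ 2 = B x d ^ 2) : a = d := by
  refine sub_eq_zero.mp (hB.2 _ fun x => ?_)
  rw [map_sub, sub_eq_zero]
  exact frobenius_inj F 2 (by simpa only [_root_.frobenius_def] using h x)

theorem LinearMap.BilinForm.exists_forall_eq_apply_sq [PerfectRing F 2]
    [FiniteDimensional F U] (hB : B.Nondegenerate) (f : U →ₛₗ[_root_.frobenius F 2] F) :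
    ∃ a : U, ∀ x, f x = B x a ^ 2 := by
  let φ : Module.Dual F U :=
    { toFun x := (frobeniusEquiv F 2).symm (f x)
      map_add' x y := by rw [map_add, map_add]
      map_smul' c x := by
        rw [map_smulₛₗ, smul_eq_mul, map_mul, frobeniusEquiv_symm_apply_frobenius,
          RingHom.id_apply, smul_eq_mul] }
  refine ⟨(B.flip.toDual (Nondegenerate.flip hB)).symm φ, fun x => ?_⟩
  rw [← B.flip_apply, apply_toDual_symm_apply]
  exact (frobenius_apply_frobeniusEquiv_symm F 2 (f x)).symm.trans (_root_.frobenius_def 2 _)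

end CharTwo

/-- For every self-adjoint `T` there is a unique self-adjoint operator
`R = E_{a,a}` of rank at most 1 such that `T + R` is skew-symmetric; moreover
`B x (T x) = B x a ^ 2` for all `x`. -/
theorem exists_unique_rank_one_correction
    (F U : Type*) [Field F] [Fintype F] [CharP F 2]
    [AddCommGroup U] [Module F U] [FiniteDimensional F U]
    (B : LinearMap.BilinForm F U) (hsymm : B.IsSymm) (hnd : B.Nondegenerate)
    (T : U →ₗ[F] U) (hT : IsSelfAdjOp B T) :
    ∃ a : U, IsSkewOp B (T + Eop B a a) ∧
      (∀ x : U, B x (T x) = B x a ^ 2) ∧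
      Module.finrank F (LinearMap.range (Eop B a a)) ≤ 1 ∧
      ∀ R : U →ₗ[F] U, IsSelfAdjOp B R →
        Module.finrank F (LinearMap.range R) ≤ 1 →
        IsSkewOp B (T + R) → R = Eop B a a := by
  obtain ⟨a, ha⟩ := exists_forall_eq_apply_sq hnd (hT.frobeniusSemilinearForm hsymm)
  replace ha : ∀ x, B x (T x) = B x a ^ 2 := ha
  refine ⟨a, fun x => ?_, ha, finrank_range_Eop_le_one B a a, fun R hR hrank hskew => ?_⟩
  · rw [LinearMap.add_apply, map_add, ha, apply_Eop_self, CharTwo.add_self_eq_zero]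
  · obtain ⟨d, rfl⟩ := hR.exists_eq_Eop hnd hrank
    have hd : ∀ x, B x d ^ 2 = B x a ^ 2 := fun x => by
      have hx := hskew x
      rwa [LinearMap.add_apply, map_add, ha, apply_Eop_self, CharTwo.add_eq_zero, eq_comm] at hx
    rw [eq_of_forall_apply_sq_eq hnd hd]
end

section
/- Let U be an F_q-space (q even) with nondegenerate symmetric bilinear form b, and let T be a self-adjoint operator such that T + E_{a,a} is skew-symmetric. Then a ∈ Im(T), and rk(T + E_{a,a}) equals rk(T) if rk(T) is even, and equals rk(T) ± 1 if rk(T) is odd. -/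
/-! For self-adjoint `T` one has `Im T = (ker T)^⊥`, and for `n ∈ ker T` skewness of
`S = T + E_{a,a}` at `n` reads `b(n, a)^2 = 0`; hence `a ∈ Im T`. The form `x, y ↦ b(x, yS)`
is alternating of rank `rk S`, so `rk S` is even, and `S - T = E_{a,a}` has rank at most one, so
`|rk S - rk T| ≤ 1`. Parity then pins down `rk S`. -/

open Module LinearMap LinearMap.BilinForm

section RankOne

variable {K V W : Type*} [Field K] [AddCommGroup V] [Module K V] [AddCommGroup W] [Module K W]

lemma finrank_range_smulRight_le_one (φ : Dual K V) (c : W) :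
    finrank K (range (φ.smulRight c)) ≤ 1 := by
  have hle : range (φ.smulRight c) ≤ K ∙ c := by
    rintro _ ⟨x, rfl⟩
    exact Submodule.smul_mem _ _ (Submodule.mem_span_singleton_self c)
  exact (Submodule.finrank_mono hle).trans <| (finrank_span_le_card ({c} : Set W)).trans (by simp)

variable [FiniteDimensional K W]

lemma finrank_range_add_smulRight_le (f : V →ₗ[K] W) (φ : Dual K V) (c : W) :
    finrank K (range (f + φ.smulRight c)) ≤ finrank K (range f) + 1 :=
  calc finrank K (range (f + φ.smulRight c))
      ≤ finrank K ↥(range f ⊔ range (φ.smulRight c)) :=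
        Submodule.finrank_mono (range_add_le _ _)
    _ ≤ finrank K (range f) + finrank K (range (φ.smulRight c)) :=
        Submodule.finrank_add_le_finrank_add_finrank _ _
    _ ≤ finrank K (range f) + 1 := by grw [finrank_range_smulRight_le_one]

lemma finrank_range_le_finrank_range_add_smulRight (f : V →ₗ[K] W) (φ : Dual K V) (c : W) :
    finrank K (range f) ≤ finrank K (range (f + φ.smulRight c)) + 1 := by
  have hf : f + φ.smulRight c + (-φ).smulRight c = f := by ext; simp
  have := finrank_range_add_smulRight_le (f + φ.smulRight c) (-φ) c
  rwa [hf] at this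

end RankOne

namespace LinearMap.BilinForm

variable {K V : Type*} [Field K] [AddCommGroup V] [Module K V] {C : LinearMap.BilinForm K V}

lemma IsAlt.eq_zero_of_apply_pair_eq_zero (hC : C.IsAlt) {x y : V} (hxy : C x y ≠ 0) {s t : K}
    (hx : C (s • x + t • y) x = 0) (hy : C (s • x + t • y) y = 0) : s = 0 ∧ t = 0 := by
  have hyx : C y x ≠ 0 := hC.neg_eq x y ▸ neg_ne_zero.2 hxy
  simp only [map_add, map_smul, LinearMap.add_apply, LinearMap.smul_apply, smul_eq_mul,
    hC.self_eq_zero x, hC.self_eq_zero y, mul_zero, zero_add, add_zero] at hx hy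
  exact ⟨(mul_eq_zero.1 hy).resolve_right hxy, (mul_eq_zero.1 hx).resolve_right hyx⟩

lemma IsAlt.restrict_span_pair_nondegenerate (hC : C.IsAlt) {x y : V}
    (hxy : C x y ≠ 0) : (C.restrict (Submodule.span K {x, y})).Nondegenerate := by
  refine (IsAlt.isRefl (B₁ := C.restrict _) fun w => hC w).nondegenerate_iff_separatingLeft.2 ?_
  rintro ⟨w, hw⟩ hw0
  obtain ⟨s, t, rfl⟩ := Submodule.mem_span_pair.1 hw
  obtain ⟨rfl, rfl⟩ := hC.eq_zero_of_apply_pair_eq_zero hxy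
    (hw0 ⟨x, Submodule.subset_span (by simp)⟩) (hw0 ⟨y, Submodule.subset_span (by simp)⟩)
  simp

theorem even_finrank_of_isAlt_of_nondegenerate [FiniteDimensional K V] (hC : C.IsAlt)
    (hnd : C.Nondegenerate) : Even (finrank K V) := by
  induction hn : finrank K V using Nat.strong_induction_on generalizing V C with
  | _ n ih =>
  obtain rfl | hpos := n.eq_zero_or_pos
  · exact .zero
  have : Nontrivial V := finrank_pos_iff.1 (hn ▸ hpos)
  obtain ⟨x, hx⟩ := exists_ne (0 : V)
  obtain ⟨y, hxy⟩ : ∃ y, C x y ≠ 0 := by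
    by_contra! h
    exact hx (hnd.1 x h)
  set P := Submodule.span K {x, y}
  have hP := hC.restrict_span_pair_nondegenerate hxy
  have hPdim : finrank K P = 2 := by
    have hli : LinearIndependent K ![x, y] := LinearIndependent.pair_iff.2 fun s t hst =>
      hC.eq_zero_of_apply_pair_eq_zero hxy (by simp [hst]) (by simp [hst])
    have hrange : Set.range ![x, y] = {x, y} := by
      simp [Matrix.range_cons, Matrix.range_empty, Set.pair_comm]
    have := finrank_span_eq_card hli
    rw [hrange] at this
    simpa using this
  have hrefl : C.IsRefl := hC.isRefl
  have hPperp : (C.restrict (C.orthogonal P)).Nondegenerate := by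
    refine C.nondegenerate_restrict_of_disjoint_orthogonal hrefl ?_
    rw [orthogonal_orthogonal hnd hrefl]
    exact (isCompl_orthogonal_of_restrict_nondegenerate hrefl hP).disjoint.symm
  have hperpdim : finrank K (C.orthogonal P) = n - 2 := by
    rw [finrank_orthogonal hnd, hn, hPdim]
  have hn2 : 2 ≤ n := hn ▸ hPdim ▸ Submodule.finrank_le P
  obtain ⟨k, hk⟩ := ih (n - 2) (by omega) (C := C.restrict _) (fun w => hC w) hPperp hperpdim
  exact ⟨k + 1, by omega⟩

lemma IsRefl.nondegenerate_restrict_of_isCompl_ker (hC : C.IsRefl)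
    {W : Submodule K V} (hW : IsCompl (ker C) W) : (C.restrict W).Nondegenerate := by
  refine (hC.domRestrict W).nondegenerate_iff_separatingLeft.2 ?_
  rintro ⟨w, hw⟩ hw0
  suffices hker : w ∈ ker C from Subtype.ext (Submodule.disjoint_def.1 hW.disjoint w hker hw)
  ext u
  obtain ⟨k, hk, p, hp, rfl⟩ :=
    Submodule.mem_sup.1 (hW.sup_eq_top ▸ Submodule.mem_top : u ∈ ker C ⊔ W)
  have hkw : C w k = 0 := hC k w (by rw [mem_ker.1 hk, LinearMap.zero_apply])
  have hwp : C w p = 0 := hw0 ⟨p, hp⟩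
  simp [hkw, hwp]

theorem even_finrank_range_of_isAlt [FiniteDimensional K V] (hC : C.IsAlt) :
    Even (finrank K (range C)) := by
  obtain ⟨W, hW⟩ := (ker C).exists_isCompl
  have hWrange : finrank K W = finrank K (range C) := by
    have := Submodule.finrank_add_eq_of_isCompl hW
    have := finrank_range_add_finrank_ker C
    omega
  exact hWrange ▸ even_finrank_of_isAlt_of_nondegenerate (fun w => hC w)
    (hC.isRefl.nondegenerate_restrict_of_isCompl_ker hW)

end LinearMap.BilinForm

section Operators

variable {K V : Type*} [Field K] [AddCommGroup V] [Module K V] [FiniteDimensional K V]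
  {B : LinearMap.BilinForm K V} {T : V →ₗ[K] V}

theorem even_finrank_range_of_isSkewOp (hB : B.Nondegenerate) (hT : IsSkewOp B T) :
    Even (finrank K (range T)) := by
  -- `x, y ↦ b(x, T y)` is alternating, of the rank of `T` since `b` identifies `V` with its dual.
  have hC : (T.dualMap ∘ₗ (B.toDual hB).toLinearMap : LinearMap.BilinForm K V).IsAlt := hT
  have := even_finrank_range_of_isAlt hC
  rwa [range_comp_of_range_eq_top _ (B.toDual hB).range, finrank_range_dualMap_eq_finrank_range]
    at this

theorem IsSelfAdjOp.range_eq_orthogonal_ker (hB : B.Nondegenerate) (hT : IsSelfAdjOp B T) :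
    range T = B.orthogonal (ker T) := by
  refine Submodule.eq_of_le_of_finrank_le ?_ ?_
  · rintro _ ⟨x, rfl⟩ n hn
    change B n (T x) = 0
    rw [← hT, mem_ker.1 hn, map_zero, LinearMap.zero_apply]
  · rw [finrank_orthogonal hB]
    have := finrank_range_add_finrank_ker T
    omega

theorem mem_range_of_isSkewOp_add_Eop (hB : B.Nondegenerate) (hT : IsSelfAdjOp B T) {a : V}
    (hskew : IsSkewOp B (T + Eop B a a)) : a ∈ range T := by
  rw [hT.range_eq_orthogonal_ker hB]
  intro n hn
  have h : B n (T n + B n a • a) = 0 := hskew n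
  rwa [mem_ker.1 hn, zero_add, map_smul, smul_eq_mul, mul_self_eq_zero] at h

end Operators

theorem rank_of_skew_correction_general
    (F U : Type*) [Field F]
    [AddCommGroup U] [Module F U] [FiniteDimensional F U]
    (B : LinearMap.BilinForm F U) (hnd : B.Nondegenerate)
    (T : U →ₗ[F] U) (hT : IsSelfAdjOp B T)
    (a : U) (hskew : IsSkewOp B (T + Eop B a a)) :
    a ∈ LinearMap.range T ∧
    (Even (Module.finrank F (LinearMap.range T)) →
      Module.finrank F (LinearMap.range (T + Eop B a a)) =
        Module.finrank F (LinearMap.range T)) ∧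
    (Odd (Module.finrank F (LinearMap.range T)) →
      Module.finrank F (LinearMap.range (T + Eop B a a)) =
        Module.finrank F (LinearMap.range T) + 1 ∨
      Module.finrank F (LinearMap.range (T + Eop B a a)) =
        Module.finrank F (LinearMap.range T) - 1) := by
  obtain ⟨k, hk⟩ := even_finrank_range_of_isSkewOp hnd hskew
  have hle : finrank F (range (T + Eop B a a)) ≤ finrank F (range T) + 1 :=
    finrank_range_add_smulRight_le T (B.flip a) a
  have hge : finrank F (range T) ≤ finrank F (range (T + Eop B a a)) + 1 :=
    finrank_range_le_finrank_range_add_smulRight T (B.flip a) a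
  exact ⟨mem_range_of_isSkewOp_add_Eop hnd hT hskew, fun ⟨m, hm⟩ => by omega,
    fun ⟨m, hm⟩ => by omega⟩

/-- If `T` is self-adjoint and `T + E_{a,a}` is skew-symmetric, then
`a ∈ Im T`, and the rank of `T + E_{a,a}` is `rk T` when `rk T` is even and
`rk T ± 1` when `rk T` is odd. -/
theorem rank_of_skew_correction
    (F U : Type*) [Field F] [Fintype F] [CharP F 2]
    [AddCommGroup U] [Module F U] [FiniteDimensional F U]
    (B : LinearMap.BilinForm F U) (hsymm : B.IsSymm) (hnd : B.Nondegenerate)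
    (T : U →ₗ[F] U) (hT : IsSelfAdjOp B T)
    (a : U) (hskew : IsSkewOp B (T + Eop B a a)) :
    a ∈ LinearMap.range T ∧
    (Even (Module.finrank F (LinearMap.range T)) →
      Module.finrank F (LinearMap.range (T + Eop B a a)) =
        Module.finrank F (LinearMap.range T)) ∧
    (Odd (Module.finrank F (LinearMap.range T)) →
      Module.finrank F (LinearMap.range (T + Eop B a a)) =
        Module.finrank F (LinearMap.range T) + 1 ∨
      Module.finrank F (LinearMap.range (T + Eop B a a)) =
        Module.finrank F (LinearMap.range T) - 1) :=
  rank_of_skew_correction_general F U B hnd T hT a hskew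
end

section
/- Let Σ = {C(a) : a ∈ U} be a symplectic spread-set of self-adjoint operators on U = V(n,2) (n odd) with canonical labeling C (so C(a) + E_{a,a} is skew-symmetric for each a, and C is a bijection U → Σ with C(0)=0 and C(a)+C(b) invertible for a ≠ b). Define B(a) := C(a) + E_{a,a}. Then Δ = {B(a) : a ∈ U} is a DHO-set: each B(a) is skew-symmetric; for distinct a, b ∈ U, rk(B(a)+B(b)) = n−1; and for each fixed a, the kernels ker(B(a)+B(b)) for b ≠ a run over all 1-dimensional subspaces of U. -/
/-!
Put `D = B(a) + B(b) = (C a + C b) + (E_{a,a} + E_{b,b})` for `a ≠ b`. As `C a + C b` is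
invertible and `E_{a,a} + E_{b,b}` has rank at most `2`, `dim ker D ≤ 2`. As `D` is skew,
`(x, y) ↦ b(y, D x)` is an alternating form of rank `rk D`, so `rk D` is even; `n` being odd,
`dim ker D = 1`.

A nonzero `x ∈ ker D` satisfies `b(x, a) + b(x, b) = 1`: if both terms vanish then
`(C a + C b) x = 0`, and if both are `1`, the preimage `y` of `a` under `C a + C b` is a kernel
vector with `b(y, a) ≠ b(y, b)`, which is impossible on the line spanned by `x`. If
`ker D_{a,b} = ker D_{a,b'}`, its generator also lies in `ker D_{b,b'} = ker (D_{a,b} + D_{a,b'})`,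
and the three identities add up to `0 = 1`. Hence `b ↦ ker D_{a,b}` is injective on the
`2^n - 1` points `b ≠ a`, while there are at most `2^n - 1` lines.
-/

open Module Submodule LinearMap

namespace LinearMap.BilinForm

variable {K V : Type*} [Field K] [AddCommGroup V] [Module K V] {φ : LinearMap.BilinForm K V}

lemma IsAlt.eq_zero_of_apply_smul_add_smul (hφ : φ.IsAlt) {x y : V} (hxy : φ x y ≠ 0) {s t : K}
    (hx : φ x (s • x + t • y) = 0) (hy : φ y (s • x + t • y) = 0) : s = 0 ∧ t = 0 := by
  simp only [map_add, map_smul, smul_eq_mul, hφ.self_eq_zero, mul_zero, add_zero,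
    zero_add] at hx hy
  rw [← hφ.neg_eq x y, mul_neg, neg_eq_zero] at hy
  exact ⟨(mul_eq_zero.mp hy).resolve_right hxy, (mul_eq_zero.mp hx).resolve_right hxy⟩

lemma IsAlt.finrank_span_pair (hφ : φ.IsAlt) {x y : V} (hxy : φ x y ≠ 0) :
    finrank K (span K {x, y}) = 2 := by
  have hli : LinearIndependent K ![x, y] := LinearIndependent.pair_iff.mpr fun s t h =>
    hφ.eq_zero_of_apply_smul_add_smul hxy (by simp [h]) (by simp [h])
  rw [← Matrix.range_cons_cons_empty]
  simpa using finrank_span_eq_card hli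

lemma IsAlt.restrict_span_pair_nondegenerate_s11 (hφ : φ.IsAlt) {x y : V} (hxy : φ x y ≠ 0) :
    (φ.restrict (span K {x, y})).Nondegenerate := by
  refine nondegenerate_restrict_of_disjoint_orthogonal φ hφ.isRefl (disjoint_def.mpr ?_)
  rintro m hm hm'
  obtain ⟨s, t, rfl⟩ := mem_span_pair.mp hm
  obtain ⟨rfl, rfl⟩ := hφ.eq_zero_of_apply_smul_add_smul hxy
    (mem_orthogonal_iff.mp hm' x (subset_span (by simp)))
    (mem_orthogonal_iff.mp hm' y (subset_span (by simp)))
  simp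

lemma IsAlt.restrict (hφ : φ.IsAlt) (W : Submodule K V) : (φ.restrict W).IsAlt :=
  fun w => hφ w

theorem IsAlt.even_finrank_of_nondegenerate [FiniteDimensional K V] (hφ : φ.IsAlt)
    (hnd : φ.Nondegenerate) : Even (finrank K V) := by
  induction hn : finrank K V using Nat.strong_induction_on generalizing V φ with
  | _ n ih =>
  rcases subsingleton_or_nontrivial V with hV | hV
  · simp [← hn, finrank_zero_of_subsingleton]
  obtain ⟨x, hx⟩ := exists_ne (0 : V)
  obtain ⟨y, hxy⟩ : ∃ y, φ x y ≠ 0 := by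
    by_contra! h
    exact hx (hnd.1 x h)
  set W := span K {x, y}
  have hcompl : IsCompl W (φ.orthogonal W) :=
    isCompl_orthogonal_of_restrict_nondegenerate hφ.isRefl
      (hφ.restrict_span_pair_nondegenerate_s11 hxy)
  have hWperp : (φ.restrict (φ.orthogonal W)).Nondegenerate := by
    rw [restrict_nondegenerate_iff_isCompl_orthogonal hφ.isRefl,
      orthogonal_orthogonal hnd hφ.isRefl]
    exact hcompl.symm
  have hdim := finrank_add_eq_of_isCompl hcompl
  rw [hφ.finrank_span_pair hxy, hn] at hdim
  obtain ⟨k, hk⟩ := ih _ (by omega) (hφ.restrict _) hWperp rfl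
  exact ⟨k + 1, by omega⟩

theorem IsAlt.even_finrank_range [FiniteDimensional K V] (hφ : φ.IsAlt) :
    Even (finrank K (range φ)) := by
  obtain ⟨S, hS⟩ := (ker φ).exists_isCompl
  have hSnd : (φ.restrict S).Nondegenerate := by
    refine nondegenerate_restrict_of_disjoint_orthogonal φ hφ.isRefl (disjoint_def.mpr ?_)
    intro s hs hs'
    suffices s ∈ ker φ from disjoint_def.mp hS.disjoint s this hs
    ext v
    obtain ⟨k, hk, t, ht, rfl⟩ := mem_sup.mp (hS.sup_eq_top ▸ mem_top : v ∈ _ ⊔ S)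
    rw [map_add, ← hφ.neg_eq, mem_ker.mp hk, ← hφ.neg_eq,
      mem_orthogonal_iff.mp hs' t ht]
    simp
  have hdim := finrank_add_eq_of_isCompl hS
  have hrank := finrank_range_add_finrank_ker φ
  rw [show finrank K (range φ) = finrank K S by omega]
  exact (hφ.restrict S).even_finrank_of_nondegenerate hSnd

end LinearMap.BilinForm

section

variable {K V : Type*} [Field K] [AddCommGroup V] [Module K V]

@[simp] lemma eop_apply (B : LinearMap.BilinForm K V) (a c x : V) : Eop B a c x = B x a • c := rfl

lemma finrank_range_eop_add_eop_le_two [FiniteDimensional K V] (B : LinearMap.BilinForm K V)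
    (a b : V) : finrank K (range (Eop B a a + Eop B b b)) ≤ 2 := by
  classical
  have hle : range (Eop B a a + Eop B b b) ≤ span K ({a, b} : Finset V) := by
    rintro _ ⟨x, rfl⟩
    rw [Finset.coe_pair]
    exact mem_span_pair.mpr ⟨B x a, B x b, rfl⟩
  exact (finrank_mono hle).trans ((finrank_span_finset_le_card _).trans Finset.card_le_two)

lemma IsSkewOp.add {B : LinearMap.BilinForm K V} {S T : V →ₗ[K] V} (hS : IsSkewOp B S)
    (hT : IsSkewOp B T) : IsSkewOp B (S + T) := fun x => by
  rw [LinearMap.add_apply, map_add, hS x, hT x, add_zero]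

lemma finrank_ker_add_le_of_injective {W : Type*} [AddCommGroup W] [Module K W]
    [FiniteDimensional K W] {M E : V →ₗ[K] W} (hM : Function.Injective M) :
    finrank K (ker (M + E)) ≤ finrank K (range E) := by
  have hmaps : ∀ x ∈ ker (M + E), M x ∈ range E := fun x hx =>
    ⟨-x, by rw [map_neg, neg_eq_iff_eq_neg, eq_neg_iff_add_eq_zero, add_comm]; exact hx⟩
  exact finrank_le_finrank_of_injective (f := (M.domRestrict _).codRestrict _ fun x => hmaps x x.2)
    fun x y h => Subtype.ext (hM (congrArg Subtype.val h))

theorem IsSkewOp.even_finrank_range [FiniteDimensional K V] {B : LinearMap.BilinForm K V}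
    (hB : B.Nondegenerate) {T : V →ₗ[K] V} (hT : IsSkewOp B T) : Even (finrank K (range T)) := by
  have hinj : Function.Injective B.flip := ker_eq_bot.mp hB.flip.ker_eq_bot
  have halt : LinearMap.BilinForm.IsAlt (B.flip ∘ₗ T) := hT
  rw [(equivMapOfInjective _ hinj _).finrank_eq, ← range_comp]
  exact halt.even_finrank_range

end

section Counting

variable {K V : Type*} [Field K] [AddCommGroup V] [Module K V] [Finite V]

lemma natCard_finrank_eq_one_le_natCard_ne_zero :
    Nat.card {P : Submodule K V // finrank K P = 1} ≤ Nat.card {x : V // x ≠ 0} :=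
  Nat.card_le_card_of_surjective (fun x => ⟨K ∙ x.1, finrank_span_singleton x.2⟩) fun P => by
    obtain ⟨x, hx, hx0⟩ := P.1.ne_bot_iff.mp (isAtom_iff_finrank_eq_one.mpr P.2).1
    exact ⟨⟨x, hx0⟩, Subtype.ext (eq_span_singleton_of_mem_of_finrank_eq_one P.2 hx hx0).symm⟩

lemma eq_setOf_finrank_eq_one_of_injOn {a : V} {f : V → Submodule K V}
    (hf : ∀ b ≠ a, finrank K (f b) = 1) (hinj : Set.InjOn f {a}ᶜ) :
    {P | ∃ b, b ≠ a ∧ P = f b} = {P : Submodule K V | finrank K P = 1} := by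
  let g : {b // b ≠ a} → {P : Submodule K V // finrank K P = 1} := fun b => ⟨f b, hf b b.2⟩
  have hg : Function.Injective g := fun b b' h =>
    Subtype.ext (hinj b.2 b'.2 (congrArg Subtype.val h))
  have hcard : Nat.card {b // b ≠ a} = Nat.card {x : V // x ≠ 0} :=
    Nat.card_congr (Equiv.subtypeEquiv (Equiv.subRight a) fun b => sub_ne_zero.symm)
  have hgbij := hg.bijective_of_nat_card_le (hcard ▸ natCard_finrank_eq_one_le_natCard_ne_zero)
  ext P
  refine ⟨?_, fun hP => ?_⟩
  · rintro ⟨b, hb, rfl⟩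
    exact hf b hb
  · obtain ⟨b, hb⟩ := hgbij.2 ⟨P, hP⟩
    exact ⟨b, b.2, congrArg Subtype.val hb.symm⟩

end Counting

section Shadow

variable {U : Type*} [AddCommGroup U] [Module (ZMod 2) U] {B : LinearMap.BilinForm (ZMod 2) U}
  {C : U → U →ₗ[ZMod 2] U} {a b : U}

-- The paper's operator `B(a)`; here `B` names the bilinear form.
def shadowOp (B : LinearMap.BilinForm (ZMod 2) U) (C : U → U →ₗ[ZMod 2] U) (a : U) :
    U →ₗ[ZMod 2] U :=
  C a + Eop B a a

lemma shadowOp_add_shadowOp (a b : U) :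
    shadowOp B C a + shadowOp B C b = (C a + C b) + (Eop B a a + Eop B b b) := by
  simp only [shadowOp]
  abel

lemma mem_ker_shadowOp_add_iff {x : U} :
    x ∈ ker (shadowOp B C a + shadowOp B C b) ↔ (C a + C b) x = B x a • a + B x b • b := by
  rw [mem_ker, shadowOp_add_shadowOp, LinearMap.add_apply, add_eq_zero_iff_eq_neg,
    ZModModule.neg_eq_self]
  rfl

lemma apply_apply_self_eq_add (hskew : ∀ a, IsSkewOp B (shadowOp B C a)) (a b x : U) :
    B x ((C a + C b) x) = B x a + B x b := by
  have h := (hskew a).add (hskew b) x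
  rw [shadowOp_add_shadowOp] at h
  have hsq : ∀ c : ZMod 2, c * c = c := by decide
  simp only [LinearMap.add_apply, eop_apply, map_add, map_smul, smul_eq_mul, hsq] at h ⊢
  grind

lemma finrank_ker_shadowOp_add_eq_one [FiniteDimensional (ZMod 2) U]
    (hodd : Odd (finrank (ZMod 2) U)) (hB : B.Nondegenerate)
    (hskew : ∀ a, IsSkewOp B (shadowOp B C a)) (hM : Function.Injective (C a + C b)) :
    finrank (ZMod 2) (ker (shadowOp B C a + shadowOp B C b)) = 1 := by
  have hle : finrank (ZMod 2) (ker (shadowOp B C a + shadowOp B C b)) ≤ 2 := by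
    rw [shadowOp_add_shadowOp]
    exact (finrank_ker_add_le_of_injective hM).trans (finrank_range_eop_add_eop_le_two B a b)
  have hrank := finrank_range_add_finrank_ker (shadowOp B C a + shadowOp B C b)
  obtain ⟨k, hk⟩ := ((hskew a).add (hskew b)).even_finrank_range hB
  obtain ⟨m, hm⟩ := hodd
  omega

lemma exists_mem_ker_shadowOp_add (hskew : ∀ a, IsSkewOp B (shadowOp B C a))
    (hM : Function.Bijective (C a + C b)) {x : U} (hx : x ∈ ker (shadowOp B C a + shadowOp B C b))
    (ha : B x a = 1) (hb : B x b = 1) :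
    ∃ y ∈ ker (shadowOp B C a + shadowOp B C b), B y a = 1 ∧ B y b = 0 := by
  obtain ⟨y, hy⟩ := hM.2 a
  obtain ⟨z, hz⟩ := hM.2 b
  have hyb : B y b = 0 := by
    simpa [hy] using apply_apply_self_eq_add hskew a b y
  have hza : B z a = 0 := by
    simpa [hz] using apply_apply_self_eq_add hskew a b z
  have hxyz : x = y + z := hM.1 <| by
    rw [mem_ker_shadowOp_add_iff.mp hx, map_add, hy, hz, ha, hb, one_smul, one_smul]
  have hya : B y a = 1 := by
    rwa [hxyz, map_add, LinearMap.add_apply, hza, add_zero] at ha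
  refine ⟨y, mem_ker_shadowOp_add_iff.mpr ?_, hya, hyb⟩
  rw [hy, hya, hyb, one_smul, zero_smul, add_zero]

lemma apply_add_apply_eq_one_of_mem_ker (hskew : ∀ a, IsSkewOp B (shadowOp B C a))
    (hM : Function.Bijective (C a + C b))
    (hker : finrank (ZMod 2) (ker (shadowOp B C a + shadowOp B C b)) = 1) {x : U} (hx0 : x ≠ 0)
    (hx : x ∈ ker (shadowOp B C a + shadowOp B C b)) : B x a + B x b = 1 := by
  have hcases : ∀ p q : ZMod 2, p + q = 1 ∨ (p = 0 ∧ q = 0) ∨ (p = 1 ∧ q = 1) := by decide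
  rcases hcases (B x a) (B x b) with h | ⟨ha, hb⟩ | ⟨ha, hb⟩
  · exact h
  · refine absurd (hM.1 ?_) hx0
    rw [mem_ker_shadowOp_add_iff.mp hx, ha, hb, map_zero, zero_smul, zero_smul, add_zero]
  · obtain ⟨y, hy, hya, hyb⟩ := exists_mem_ker_shadowOp_add hskew hM hx ha hb
    rw [eq_span_singleton_of_mem_of_finrank_eq_one hker hx hx0] at hy
    obtain ⟨c, rfl⟩ := mem_span_singleton.mp hy
    simp only [map_smul, LinearMap.smul_apply, ha, hb, smul_eq_mul, mul_one] at hya hyb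
    exact absurd (hya.symm.trans hyb) one_ne_zero

lemma injOn_ker_shadowOp_add (hskew : ∀ a, IsSkewOp B (shadowOp B C a))
    (hinv : ∀ a b, a ≠ b → Function.Bijective (C a + C b))
    (hker : ∀ a b, a ≠ b → finrank (ZMod 2) (ker (shadowOp B C a + shadowOp B C b)) = 1) (a : U) :
    Set.InjOn (fun b => ker (shadowOp B C a + shadowOp B C b)) {a}ᶜ := by
  rintro b (hb : b ≠ a) b' (hb' : b' ≠ a) heq
  simp only at heq
  by_contra hbb'
  obtain ⟨x, hx, hx0⟩ := (ker (shadowOp B C a + shadowOp B C b)).ne_bot_iff.mp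
    (isAtom_iff_finrank_eq_one.mpr (hker a b hb.symm)).1
  have hx' : x ∈ ker (shadowOp B C a + shadowOp B C b') := heq ▸ hx
  have hx'' : x ∈ ker (shadowOp B C b + shadowOp B C b') := by
    have hsum : shadowOp B C b + shadowOp B C b' =
        (shadowOp B C a + shadowOp B C b) + (shadowOp B C a + shadowOp B C b') := by
      rw [add_comm (shadowOp B C a) (shadowOp B C b), ZModModule.add_add_add_cancel]
    rw [hsum, mem_ker, LinearMap.add_apply, mem_ker.mp hx, mem_ker.mp hx', add_zero]
  have key : ∀ {p q}, p ≠ q → x ∈ ker (shadowOp B C p + shadowOp B C q) → B x p + B x q = 1 :=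
    fun hpq => apply_add_apply_eq_one_of_mem_ker hskew (hinv _ _ hpq) (hker _ _ hpq) hx0
  have hparity : ∀ p q r : ZMod 2, p + q = 1 → p + r = 1 → q + r ≠ 1 := by decide
  exact hparity _ _ _ (key hb.symm hx) (key hb'.symm hx') (key hbb' hx'')

end Shadow

theorem shadow_is_DHO_set_general
    (n : ℕ) (hodd : Odd n)
    (U : Type*) [AddCommGroup U] [Module (ZMod 2) U] [FiniteDimensional (ZMod 2) U]
    (hn : Module.finrank (ZMod 2) U = n)
    (B : LinearMap.BilinForm (ZMod 2) U) (hnd : B.Nondegenerate)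
    (C : U → (U →ₗ[ZMod 2] U)) (hinv : ∀ a b : U, a ≠ b → Function.Bijective (C a + C b))
    (hskew : ∀ a : U, IsSkewOp B (C a + Eop B a a)) :
    (∀ a : U, IsSkewOp B (C a + Eop B a a)) ∧
    (∀ a b : U, a ≠ b →
      Module.finrank (ZMod 2)
        (LinearMap.range ((C a + Eop B a a) + (C b + Eop B b b))) = n - 1) ∧
    (∀ a : U,
      {P : Submodule (ZMod 2) U | ∃ b : U, b ≠ a ∧
          P = LinearMap.ker ((C a + Eop B a a) + (C b + Eop B b b))} =
        {P : Submodule (ZMod 2) U | Module.finrank (ZMod 2) P = 1}) := by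
  have hker : ∀ a b, a ≠ b → finrank (ZMod 2) (ker (shadowOp B C a + shadowOp B C b)) = 1 :=
    fun a b hab => finrank_ker_shadowOp_add_eq_one (hn ▸ hodd) hnd hskew (hinv a b hab).1
  refine ⟨hskew, fun a b hab => ?_, fun a => ?_⟩
  · have hrank := finrank_range_add_finrank_ker (shadowOp B C a + shadowOp B C b)
    rw [hker a b hab, hn] at hrank
    exact Nat.eq_sub_of_add_eq hrank
  · have : Finite U := Module.finite_of_finite (ZMod 2)
    exact eq_setOf_finrank_eq_one_of_injOn (fun b hb => hker a b hb.symm)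
      (injOn_ker_shadowOp_add hskew hinv hker a)

/-- The shadow `Δ = {C a + E_{a,a}}` of a symplectic spread-set with canonical
labeling `C` is a DHO-set: skew-symmetric operators whose pairwise sums have
rank `n - 1`, the kernels running over all 1-spaces. -/
theorem shadow_is_DHO_set
    (n : ℕ) (hodd : Odd n)
    (U : Type*) [AddCommGroup U] [Module (ZMod 2) U] [FiniteDimensional (ZMod 2) U]
    (hn : Module.finrank (ZMod 2) U = n)
    (B : LinearMap.BilinForm (ZMod 2) U) (hsymm : B.IsSymm) (hnd : B.Nondegenerate)
    (C : U → (U →ₗ[ZMod 2] U)) (hC0 : C 0 = 0) (hCinj : Function.Injective C)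
    (hsa : ∀ a : U, IsSelfAdjOp B (C a))
    (hinv : ∀ a b : U, a ≠ b → Function.Bijective (C a + C b))
    (hskew : ∀ a : U, IsSkewOp B (C a + Eop B a a)) :
    (∀ a : U, IsSkewOp B (C a + Eop B a a)) ∧
    (∀ a b : U, a ≠ b →
      Module.finrank (ZMod 2)
        (LinearMap.range ((C a + Eop B a a) + (C b + Eop B b b))) = n - 1) ∧
    (∀ a : U,
      {P : Submodule (ZMod 2) U | ∃ b : U, b ≠ a ∧
          P = LinearMap.ker ((C a + Eop B a a) + (C b + Eop B b b))} =
        {P : Submodule (ZMod 2) U | Module.finrank (ZMod 2) P = 1}) :=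
  shadow_is_DHO_set_general n hodd U hn B hnd C hinv hskew
end

section
/- Let F = F_{2^n} with n odd, viewed as an F_2-space with bilinear form b(x,y) = Tr(xy) (absolute trace). For a ∈ F define B(a): F → F by xB(a) = a^2 x + Tr(xa)a. Then {B(a) : a ∈ F} is a DHO-set: each B(a) is F_2-linear and skew-symmetric with respect to b; rk(B(a)+B(b)) = n−1 for distinct a, b; and for fixed a the kernels ker(B(a)+B(b)), b ≠ a, are exactly all 1-dimensional F_2-subspaces of F. -/
/-!
Since `Tr (y ^ 2) = Tr y`, skew-symmetry is `Tr (x B(a) x) = Tr ((xa)²) + Tr (xa)² = 0`.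
Write `c = a + d` with `d ≠ 0`. A vector `x` in the kernel of `B(a) + B(a + d)` satisfies
`d² x = Tr (xa) a + Tr (x(a + d)) (a + d)`; pairing this with `a + d` forces `Tr (x(a + d)) = 0`
as soon as `Tr (a/d) = 1`, and then the kernel is spanned by `a/d²`. For odd `n` we have
`Tr (a/d) + Tr ((a + d)/d) = Tr 1 = 1`, so `a` or `a + d` plays this role: every kernel is a line
and every rank is `n - 1`. Conversely a nonzero `x` lies in such a kernel: if `Tr (xa) = 1` take
`d = √(a/x)`, so that `x = a/d²`; if `Tr (xa) = 0`, Artin–Schreier theory (the image of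
`e ↦ e² + e` is the trace-zero hyperplane) gives `e² + e = xa` with `Tr e = 1`, and `d = e/x`
gives `x = (a + d)/d²`.
-/

open Module LinearMap Algebra

namespace DesarguesianShadow

variable {F : Type*} [Field F] [Finite F] [Algebra (ZMod 2) F]

local instance : CharP F 2 := charP_of_injective_algebraMap' (ZMod 2) 2

local notation "Tr" => Algebra.trace (ZMod 2) F

theorem zmod_two_eq_zero_or_one : ∀ t : ZMod 2, t = 0 ∨ t = 1 := by decide

theorem trace_sq (x : F) : Tr (x ^ 2) = Tr x := by
  have := Fintype.ofFinite F
  simpa [FiniteField.coe_frobeniusAlgEquivOfAlgebraic] using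
    trace_eq_of_algEquiv (FiniteField.frobeniusAlgEquivOfAlgebraic (ZMod 2) F) x

theorem trace_sq_add_self (x : F) : Tr (x ^ 2 + x) = 0 := by
  rw [map_add, trace_sq, CharTwo.add_self_eq_zero]

theorem trace_one_of_odd (hodd : Odd (finrank (ZMod 2) F)) : Tr 1 = 1 := by
  rw [← map_one (algebraMap (ZMod 2) F), trace_algebraMap, nsmul_eq_mul, mul_one,
    ZMod.natCast_eq_one_iff_odd]
  exact hodd

variable (F) in
noncomputable def artinSchreier : F →ₗ[ZMod 2] F :=
  (FiniteField.frobeniusAlgHom (ZMod 2) F).toLinearMap + LinearMap.id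

omit [Finite F] in
theorem artinSchreier_apply (x : F) : artinSchreier F x = x ^ 2 + x := rfl

theorem ker_artinSchreier : ker (artinSchreier F) = Submodule.span (ZMod 2) {1} := by
  ext x
  rw [mem_ker, artinSchreier_apply, sq, ← mul_add_one, mul_eq_zero,
    Submodule.mem_span_singleton, CharTwo.add_eq_zero]
  constructor
  · rintro (rfl | rfl)
    exacts [⟨0, zero_smul _ _⟩, ⟨1, one_smul _ _⟩]
  · rintro ⟨t, rfl⟩
    rcases zmod_two_eq_zero_or_one t with rfl | rfl <;> simp

theorem range_artinSchreier : range (artinSchreier F) = ker Tr := by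
  refine Submodule.eq_of_le_of_finrank_eq ?_ ?_
  · rintro _ ⟨x, rfl⟩
    exact trace_sq_add_self x
  · have h1 := finrank_range_add_finrank_ker (artinSchreier F)
    have h2 := finrank_range_add_finrank_ker Tr
    rw [range_eq_top.mpr (trace_surjective _ _), finrank_top, finrank_self] at h2
    rw [ker_artinSchreier, finrank_span_singleton one_ne_zero] at h1
    omega

theorem exists_sq_add_self_eq (hodd : Odd (finrank (ZMod 2) F)) {z : F} (hz : Tr z = 0) :
    ∃ e : F, e ^ 2 + e = z ∧ Tr e = 1 := by
  obtain ⟨e, rfl⟩ : z ∈ range (artinSchreier F) := by rwa [range_artinSchreier]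
  rcases zmod_two_eq_zero_or_one (Tr e) with he | he
  · refine ⟨e + 1, ?_, ?_⟩
    · rw [artinSchreier_apply, CharTwo.add_sq]
      linear_combination (CharTwo.two_eq_zero (R := F))
    · rw [map_add, he, trace_one_of_odd hodd, zero_add]
  · exact ⟨e, rfl, he⟩

variable (F) in
noncomputable def shadowOp (a : F) : F →ₗ[ZMod 2] F :=
  LinearMap.mulLeft (ZMod 2) (a ^ 2) + (Tr ∘ₗ LinearMap.mulRight (ZMod 2) a).smulRight a

omit [Finite F] in
theorem shadowOp_apply (a x : F) : shadowOp F a x = a ^ 2 * x + Tr (x * a) • a := rfl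

theorem trace_mul_shadowOp_self (a x : F) : Tr (x * shadowOp F a x) = 0 := by
  have hsq : x * (a ^ 2 * x) = (x * a) ^ 2 := by ring
  rw [shadowOp_apply, mul_add, map_add, hsq, trace_sq, mul_smul_comm, map_smul, smul_eq_mul]
  rcases zmod_two_eq_zero_or_one (Tr (x * a)) with h | h <;> rw [h] <;> decide

theorem shadowOp_add_apply (a d x : F) :
    (shadowOp F a + shadowOp F (a + d)) x =
      d ^ 2 * x + (Tr (x * a) • a + Tr (x * (a + d)) • (a + d)) := by
  rw [LinearMap.add_apply, shadowOp_apply, shadowOp_apply, CharTwo.add_sq]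
  linear_combination (a ^ 2 * x) * CharTwo.two_eq_zero (R := F)

theorem trace_mul_add_div_sq {d : F} (hd : d ≠ 0) (a : F) : Tr (a * (a + d) / d ^ 2) = 0 := by
  have h : a * (a + d) / d ^ 2 = (a / d) ^ 2 + a / d := by
    field_simp
  rw [h, trace_sq_add_self]

theorem trace_add_div_self (hodd : Odd (finrank (ZMod 2) F)) {d : F} (hd : d ≠ 0) (a : F) :
    Tr ((a + d) / d) = Tr (a / d) + 1 := by
  rw [add_div, div_self hd, map_add, trace_one_of_odd hodd]

theorem shadowOp_add_apply_div_sq {d : F} (hd : d ≠ 0) {a : F} (ha : Tr (a / d) = 1) :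
    (shadowOp F a + shadowOp F (a + d)) (a / d ^ 2) = 0 := by
  have h1 : a / d ^ 2 * a = (a / d) ^ 2 := by rw [div_pow]; ring
  have h2 : a / d ^ 2 * (a + d) = a * (a + d) / d ^ 2 := by ring
  rw [shadowOp_add_apply, h1, h2, trace_sq, ha, trace_mul_add_div_sq hd,
    mul_div_cancel₀ _ (pow_ne_zero 2 hd), one_smul, zero_smul, add_zero,
    CharTwo.add_self_eq_zero]

theorem ker_shadowOp_add_eq_span (hodd : Odd (finrank (ZMod 2) F)) {d : F} (hd : d ≠ 0) {a : F}
    (ha : Tr (a / d) = 1) :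
    ker (shadowOp F a + shadowOp F (a + d)) = Submodule.span (ZMod 2) {a / d ^ 2} := by
  refine le_antisymm (fun x hx => ?_) ?_
  · rw [mem_ker, shadowOp_add_apply, CharTwo.add_eq_zero] at hx
    set s := Tr (x * a)
    set t := Tr (x * (a + d))
    have hx' : x = s • (a / d ^ 2) + t • ((a + d) / d ^ 2) := by
      rw [← smul_div_assoc, ← smul_div_assoc, ← add_div, ← hx]
      field_simp
    have ht : t = 0 := by
      have h1 : a / d ^ 2 * (a + d) = a * (a + d) / d ^ 2 := by ring
      have h2 : (a + d) / d ^ 2 * (a + d) = ((a + d) / d) ^ 2 := by rw [div_pow]; ring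
      calc t = Tr (x * (a + d)) := rfl
        _ = s * Tr (a * (a + d) / d ^ 2) + t * Tr (((a + d) / d) ^ 2) := by
          rw [hx', add_mul, smul_mul_assoc, smul_mul_assoc, h1, h2, map_add, map_smul,
            map_smul, smul_eq_mul, smul_eq_mul]
        _ = 0 := by
          rw [trace_mul_add_div_sq hd, trace_sq, trace_add_div_self hodd hd, ha,
            CharTwo.add_self_eq_zero, mul_zero, mul_zero, add_zero]
    rw [hx', ht, zero_smul, add_zero]
    exact Submodule.smul_mem _ _ (Submodule.mem_span_singleton_self _)
  · rw [Submodule.span_le, Set.singleton_subset_iff]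
    exact shadowOp_add_apply_div_sq hd ha

theorem finrank_ker_shadowOp_add (hodd : Odd (finrank (ZMod 2) F)) {a c : F} (hac : a ≠ c) :
    finrank (ZMod 2) (ker (shadowOp F a + shadowOp F c)) = 1 := by
  have hline : ∀ a d : F, d ≠ 0 → Tr (a / d) = 1 →
      finrank (ZMod 2) (ker (shadowOp F a + shadowOp F (a + d))) = 1 := by
    intro a d hd ha
    have ha0 : a ≠ 0 := by rintro rfl; simp at ha
    rw [ker_shadowOp_add_eq_span hodd hd ha,
      finrank_span_singleton (div_ne_zero ha0 (pow_ne_zero 2 hd))]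
  obtain ⟨d, rfl⟩ : ∃ d, c = a + d := ⟨a + c, (CharTwo.add_cancel_left a c).symm⟩
  have hd : d ≠ 0 := by rintro rfl; simp at hac
  rcases zmod_two_eq_zero_or_one (Tr (a / d)) with ha | ha
  · have hc : Tr ((a + d) / d) = 1 := by rw [trace_add_div_self hodd hd, ha, zero_add]
    have h := hline (a + d) d hd hc
    rwa [CharTwo.add_cancel_right, add_comm] at h
  · exact hline a d hd ha

theorem finrank_range_shadowOp_add (hodd : Odd (finrank (ZMod 2) F)) {a c : F} (hac : a ≠ c) :
    finrank (ZMod 2) (range (shadowOp F a + shadowOp F c)) = finrank (ZMod 2) F - 1 := by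
  have := finrank_range_add_finrank_ker (shadowOp F a + shadowOp F c)
  rw [finrank_ker_shadowOp_add hodd hac] at this
  omega

theorem exists_ne_mem_ker_shadowOp_add (hodd : Odd (finrank (ZMod 2) F)) (a : F) {x : F}
    (hx : x ≠ 0) : ∃ c ≠ a, x ∈ ker (shadowOp F a + shadowOp F c) := by
  suffices ∃ d ≠ 0, x ∈ ker (shadowOp F a + shadowOp F (a + d)) by
    obtain ⟨d, hd, hmem⟩ := this
    exact ⟨a + d, fun h => hd (by simpa using h), hmem⟩
  rcases zmod_two_eq_zero_or_one (Tr (x * a)) with hxa | hxa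
  · obtain ⟨e, he, hte⟩ := exists_sq_add_self_eq hodd hxa
    have he0 : e ≠ 0 := by rintro rfl; simp at hte
    have hd : e / x ≠ 0 := div_ne_zero he0 hx
    have hxd : (a + e / x) / (e / x) ^ 2 = x := by
      field_simp
      linear_combination he + (a * x - e ^ 2) * CharTwo.two_eq_zero (R := F)
    have htr : Tr ((a + e / x) / (e / x)) = 1 := by
      rw [← hte]
      congr 1
      calc (a + e / x) / (e / x) = (a + e / x) / (e / x) ^ 2 * (e / x) := by field_simp
        _ = e := by rw [hxd]; field_simp
    refine ⟨e / x, hd, ?_⟩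
    have := shadowOp_add_apply_div_sq hd htr
    rwa [CharTwo.add_cancel_right, add_comm, hxd] at this
  · obtain ⟨d, hd⟩ := FiniteField.isSquare_of_char_two (ringChar.eq F 2) (a / x)
    have ha0 : a ≠ 0 := by rintro rfl; simp at hxa
    have hd0 : d ≠ 0 := by rintro rfl; simp [hx, ha0] at hd
    have hxd : a / d ^ 2 = x := by
      rw [sq, ← hd]; field_simp
    have htr : Tr (a / d) = 1 := by
      rw [← trace_sq, ← hxa]; congr 1; rw [← hxd]; ring
    refine ⟨d, hd0, ?_⟩
    have := shadowOp_add_apply_div_sq hd0 htr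
    rwa [hxd] at this

theorem exists_ker_shadowOp_add_eq (hodd : Odd (finrank (ZMod 2) F)) (a : F)
    {P : Submodule (ZMod 2) F} (hP : finrank (ZMod 2) P = 1) :
    ∃ c ≠ a, P = ker (shadowOp F a + shadowOp F c) := by
  obtain ⟨x, hxP, hx⟩ := P.exists_mem_ne_zero_of_ne_bot (by rintro rfl; simp at hP)
  obtain ⟨c, hca, hxc⟩ := exists_ne_mem_ker_shadowOp_add hodd a hx
  have span_eq : ∀ Q : Submodule (ZMod 2) F, finrank (ZMod 2) Q = 1 → x ∈ Q →
      Submodule.span (ZMod 2) {x} = Q := fun Q hQ hxQ =>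
    Submodule.eq_of_le_of_finrank_eq (by rwa [Submodule.span_singleton_le_iff_mem])
      (by rw [finrank_span_singleton hx, hQ])
  exact ⟨c, hca, (span_eq P hP hxP).symm.trans
    (span_eq _ (finrank_ker_shadowOp_add hodd hca.symm) hxc)⟩

end DesarguesianShadow

theorem desarguesian_shadow_is_DHO_set_general
    (n : ℕ) (hodd : Odd n) :
    let F := GaloisField 2 n
    let tr : F →ₗ[ZMod 2] ZMod 2 := Algebra.trace (ZMod 2) F
    let Bop : F → (F →ₗ[ZMod 2] F) := fun a =>
      LinearMap.mulLeft (ZMod 2) (a ^ 2) +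
        (tr ∘ₗ LinearMap.mulRight (ZMod 2) a).smulRight a
    -- each `B(a)` is skew-symmetric for the trace form `b(x,y) = Tr(xy)`,
    (∀ a x : F, tr (x * Bop a x) = 0) ∧
    -- `rk (B(a) + B(c)) = n - 1` for `a ≠ c`,
    (∀ a c : F, a ≠ c →
      Module.finrank (ZMod 2) (LinearMap.range (Bop a + Bop c)) = n - 1) ∧
    -- and for fixed `a` the kernels `ker (B(a)+B(c))`, `c ≠ a`, are exactly
    -- the 1-dimensional subspaces of `F`.
    (∀ a : F,
      {P : Submodule (ZMod 2) F | ∃ c : F, c ≠ a ∧ P = LinearMap.ker (Bop a + Bop c)} =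
        {P : Submodule (ZMod 2) F | Module.finrank (ZMod 2) P = 1}) := by
  intro F tr Bop
  have hdim : finrank (ZMod 2) F = n := GaloisField.finrank 2 hodd.pos.ne'
  have hoddF : Odd (finrank (ZMod 2) F) := by rwa [hdim]
  refine ⟨DesarguesianShadow.trace_mul_shadowOp_self, fun a c hac => ?_,
    fun a => Set.ext fun P => ⟨?_, DesarguesianShadow.exists_ker_shadowOp_add_eq hoddF a⟩⟩
  · exact (DesarguesianShadow.finrank_range_shadowOp_add hoddF hac).trans (by rw [hdim])
  · rintro ⟨c, hca, rfl⟩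
    exact DesarguesianShadow.finrank_ker_shadowOp_add hoddF hca.symm

/-- The shadow of the desarguesian spread-set: for `F = F_{2^n}` with `n` odd,
the operators `x ↦ a²x + Tr(xa)a` form a DHO-set of skew-symmetric operators
with respect to the trace form. -/
theorem desarguesian_shadow_is_DHO_set
    (n : ℕ) (hodd : Odd n) (hn : 1 < n) :
    let F := GaloisField 2 n
    let tr : F →ₗ[ZMod 2] ZMod 2 := Algebra.trace (ZMod 2) F
    let Bop : F → (F →ₗ[ZMod 2] F) := fun a =>
      LinearMap.mulLeft (ZMod 2) (a ^ 2) +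
        (tr ∘ₗ LinearMap.mulRight (ZMod 2) a).smulRight a
    -- each `B(a)` is skew-symmetric for the trace form `b(x,y) = Tr(xy)`,
    (∀ a x : F, tr (x * Bop a x) = 0) ∧
    -- `rk (B(a) + B(c)) = n - 1` for `a ≠ c`,
    (∀ a c : F, a ≠ c →
      Module.finrank (ZMod 2) (LinearMap.range (Bop a + Bop c)) = n - 1) ∧
    -- and for fixed `a` the kernels `ker (B(a)+B(c))`, `c ≠ a`, are exactly
    -- the 1-dimensional subspaces of `F`.
    (∀ a : F,
      {P : Submodule (ZMod 2) F | ∃ c : F, c ≠ a ∧ P = LinearMap.ker (Bop a + Bop c)} =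
        {P : Submodule (ZMod 2) F | Module.finrank (ZMod 2) P = 1}) :=
  desarguesian_shadow_is_DHO_set_general n hodd
end

section
/- Let p_1 ≤ p_2 ≤ … ≤ p_ℓ be odd primes. Then (2^{p_1} − 1)(2^{p_1 p_2} − 1) ⋯ (2^{p_1 p_2 ⋯ p_ℓ} − 1) / (p_1 p_2 ⋯ p_ℓ) ≥ 2^{3^ℓ}, unless (ℓ; p_1, …, p_ℓ) is (1; 3), (1; 5), or (2; 3, 3). -/
/-!
Write `Pᵢ = p₁ ⋯ pᵢ`. Since `p ≤ 2 ^ (p - 1)`, each factor satisfies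
`pᵢ * 2 ^ (Pᵢ - pᵢ) ≤ 2 ^ (Pᵢ - 1) ≤ 2 ^ Pᵢ - 1`, so it suffices that `∑ (Pᵢ - pᵢ) ≥ 3 ^ ℓ`.
As `Pᵢ - pᵢ = pᵢ (p₁ ⋯ pᵢ₋₁ - 1) ≥ 3 ^ i - 3`, the last two summands already give this when
`ℓ ≥ 3`; for `ℓ = 2` the only nonzero summand `(p₁ - 1) p₂` is at least `9` unless `p₁ = p₂ = 3`,
and for `ℓ = 1` the claim is `8 p < 2 ^ p`, true for `p ≥ 7`.
-/

open Finset

theorem eight_mul_lt_two_pow {n : ℕ} (hn : 6 ≤ n) : 8 * n < 2 ^ n := by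
  induction n, hn using Nat.le_induction with
  | base => norm_num
  | succ n _ ih => rw [pow_succ]; omega

theorem mul_two_pow_sub_le_two_pow_sub_one {n m : ℕ} (hn : 1 ≤ n) (hnm : n ≤ m) :
    n * 2 ^ (m - n) ≤ 2 ^ m - 1 := by
  have hn_le : n ≤ 2 ^ (n - 1) := by
    obtain ⟨k, rfl⟩ := Nat.exists_eq_add_of_le' hn
    exact Nat.lt_two_pow_self
  calc n * 2 ^ (m - n) ≤ 2 ^ (n - 1) * 2 ^ (m - n) := by gcongr
    _ = 2 ^ (m - 1) := by rw [← pow_add]; congr 1; omega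
    _ ≤ 2 ^ m - 1 := Nat.le_sub_one_of_lt (Nat.pow_lt_pow_right one_lt_two (by omega))

theorem prod_mul_two_pow_sum_sub_le {ι : Type*} (s : Finset ι) {n m : ι → ℕ}
    (hn : ∀ i ∈ s, 1 ≤ n i) (hnm : ∀ i ∈ s, n i ≤ m i) :
    (∏ i ∈ s, n i) * 2 ^ (∑ i ∈ s, (m i - n i)) ≤ ∏ i ∈ s, (2 ^ m i - 1) := by
  rw [← prod_pow_eq_pow_sum, ← prod_mul_distrib]
  exact prod_le_prod' fun i hi => mul_two_pow_sub_le_two_pow_sub_one (hn i hi) (hnm i hi)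

theorem nine_le_pred_mul {a b : ℕ} (ha : 3 ≤ a) (hb : 3 ≤ b) (hodd : Odd b)
    (hne : ¬(a = 3 ∧ b = 3)) : 9 ≤ (a - 1) * b := by
  obtain ha' | ha' : a = 3 ∨ 4 ≤ a := by omega
  · subst ha'
    obtain ⟨k, rfl⟩ := hodd
    omega
  · calc 9 = 3 * 3 := rfl
      _ ≤ (a - 1) * b := Nat.mul_le_mul (by omega) hb

section PartialProducts

variable {ℓ : ℕ} (p : Fin ℓ → ℕ)

theorem le_prod_Iic (hp : ∀ j, 1 ≤ p j) (i : Fin ℓ) : p i ≤ ∏ j ∈ Iic i, p j :=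
  Nat.le_of_dvd (prod_pos fun j _ => hp j) (dvd_prod_of_mem p (mem_Iic.2 le_rfl))

theorem pow_le_prod_Iio {a : ℕ} (ha : ∀ j, a ≤ p j) (i : Fin ℓ) :
    a ^ (i : ℕ) ≤ ∏ j ∈ Iio i, p j := by
  simpa using pow_card_le_prod (Iio i) p a fun j _ => ha j

theorem prod_Iic_sub_self (i : Fin ℓ) :
    (∏ j ∈ Iic i, p j) - p i = p i * ((∏ j ∈ Iio i, p j) - 1) := by
  rw [← mul_prod_Iio_eq_prod_Iic, Nat.mul_sub_one]

theorem pow_succ_sub_le_prod_Iic_sub {a : ℕ} (ha : ∀ j, a ≤ p j) (i : Fin ℓ) :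
    a ^ ((i : ℕ) + 1) - a ≤ (∏ j ∈ Iic i, p j) - p i := by
  rw [prod_Iic_sub_self, pow_succ', ← Nat.mul_sub_one]
  gcongr
  exacts [ha i, pow_le_prod_Iio p ha i]

theorem three_pow_le_sum_prod_Iic_sub (h3 : ∀ i, 3 ≤ p i) (hodd : ∀ i, Odd (p i))
    (hℓ : 2 ≤ ℓ) (hexc : ¬(ℓ = 2 ∧ ∀ i, p i = 3)) :
    3 ^ ℓ ≤ ∑ i, ((∏ j ∈ Iic i, p j) - p i) := by
  obtain rfl | ⟨n, rfl⟩ : ℓ = 2 ∨ ∃ n, ℓ = n + 3 := by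
    obtain ⟨_ | n, rfl⟩ := Nat.exists_eq_add_of_le hℓ
    exacts [.inl rfl, .inr ⟨n, by omega⟩]
  · have hne : ¬(p 0 = 3 ∧ p 1 = 3) := by simpa [Fin.forall_fin_two] using hexc
    have hIio : Iio (1 : Fin 2) = {0} := by decide
    calc 3 ^ 2 ≤ (p 0 - 1) * p 1 := nine_le_pred_mul (h3 0) (h3 1) (hodd 1) hne
      _ = (∏ j ∈ Iic 1, p j) - p 1 := by rw [prod_Iic_sub_self, hIio, prod_singleton, mul_comm]
      _ ≤ ∑ i, ((∏ j ∈ Iic i, p j) - p i) :=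
        single_le_sum (f := fun i => (∏ j ∈ Iic i, p j) - p i) (fun _ _ => Nat.zero_le _)
          (mem_univ 1)
  · let i : Fin (n + 3) := ⟨n + 1, by omega⟩
    have hlast : 3 ^ (n + 3) - 3 ≤ (∏ j ∈ Iic (Fin.last (n + 2)), p j) - p (Fin.last (n + 2)) :=
      pow_succ_sub_le_prod_Iic_sub p h3 (Fin.last (n + 2))
    have hi : 3 ^ (n + 2) - 3 ≤ (∏ j ∈ Iic i, p j) - p i := pow_succ_sub_le_prod_Iic_sub p h3 i
    have h9 : 3 ^ 2 ≤ 3 ^ (n + 2) := Nat.pow_le_pow_right (by norm_num) (by omega)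
    have hpow_succ : 3 ^ (n + 3) = 3 * 3 ^ (n + 2) := pow_succ' 3 (n + 2)
    calc 3 ^ (n + 3) ≤ (∏ j ∈ Iic (Fin.last (n + 2)), p j) - p (Fin.last (n + 2))
          + ((∏ j ∈ Iic i, p j) - p i) := by omega
      _ = ∑ j ∈ {Fin.last (n + 2), i}, ((∏ k ∈ Iic j, p k) - p j) :=
          (sum_pair (f := fun j => (∏ k ∈ Iic j, p k) - p j) (by simp [Fin.ext_iff, i])).symm
      _ ≤ ∑ j, ((∏ k ∈ Iic j, p k) - p j) := sum_le_sum_of_subset (subset_univ _)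

end PartialProducts

theorem product_mersenne_lower_bound_general
    (ℓ : ℕ) (hl : 1 ≤ ℓ) (p : Fin ℓ → ℕ)
    (hp : ∀ i, Nat.Prime (p i)) (hoddp : ∀ i, Odd (p i))
    (hexc1 : ¬(ℓ = 1 ∧ ∀ i, p i = 3))
    (hexc2 : ¬(ℓ = 1 ∧ ∀ i, p i = 5))
    (hexc3 : ¬(ℓ = 2 ∧ ∀ i, p i = 3)) :
    (∏ i, p i) * 2 ^ 3 ^ ℓ ≤ ∏ i, (2 ^ (∏ j ∈ Finset.Iic i, p j) - 1) := by
  have hp3 (i : Fin ℓ) : 3 ≤ p i := by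
    obtain ⟨k, hk⟩ := hoddp i
    have := (hp i).two_le
    omega
  obtain rfl | hℓ : ℓ = 1 ∨ 2 ≤ ℓ := by omega
  · have hne3 : p 0 ≠ 3 := by simpa using hexc1
    have hne5 : p 0 ≠ 5 := by simpa using hexc2
    have h7 : 7 ≤ p 0 := by
      obtain ⟨k, hk⟩ := hoddp 0
      have := hp3 0
      omega
    have hIic : Iic (0 : Fin 1) = {0} := by decide
    have := eight_mul_lt_two_pow (by omega : 6 ≤ p 0)
    simp only [Fin.prod_univ_one, hIic, prod_singleton]
    omega
  · have hp1 (i : Fin ℓ) : 1 ≤ p i := (hp i).one_lt.le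
    calc (∏ i, p i) * 2 ^ 3 ^ ℓ ≤ (∏ i, p i) * 2 ^ (∑ i, ((∏ j ∈ Iic i, p j) - p i)) := by
          gcongr
          · norm_num
          · exact three_pow_le_sum_prod_Iic_sub p hp3 hoddp hℓ hexc3
      _ ≤ ∏ i, (2 ^ (∏ j ∈ Iic i, p j) - 1) :=
          prod_mul_two_pow_sum_sub_le univ (fun i _ => hp1 i) (fun i _ => le_prod_Iic p hp1 i)

/-- For odd primes `p₁ ≤ … ≤ p_ℓ`,
`(2^{p₁}-1)(2^{p₁p₂}-1)⋯(2^{p₁⋯p_ℓ}-1) / (p₁⋯p_ℓ) ≥ 2^{3^ℓ}` unless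
`(ℓ; p₁,…,p_ℓ) = (1;3), (1;5)` or `(2;3,3)`. -/
theorem product_mersenne_lower_bound
    (ℓ : ℕ) (hl : 1 ≤ ℓ) (p : Fin ℓ → ℕ)
    (hp : ∀ i, Nat.Prime (p i)) (hoddp : ∀ i, Odd (p i)) (hmono : Monotone p)
    (hexc1 : ¬(ℓ = 1 ∧ ∀ i, p i = 3))
    (hexc2 : ¬(ℓ = 1 ∧ ∀ i, p i = 5))
    (hexc3 : ¬(ℓ = 2 ∧ ∀ i, p i = 3)) :
    (∏ i, p i) * 2 ^ 3 ^ ℓ ≤ ∏ i, (2 ^ (∏ j ∈ Finset.Iic i, p j) - 1) :=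
  product_mersenne_lower_bound_general ℓ hl p hp hoddp hexc1 hexc2 hexc3
end

section
/- Let q be a prime power, n > 1, V = F_q^n, and W = V ⊕ (V ∧ V) (the direct sum of V with its second exterior power). For t ∈ V set X(t) := {(x, x ∧ t) : x ∈ V}. Then D = {X(t) : t ∈ V} satisfies: (a) dim(X(s) ∩ X(t)) = 1 for all distinct s, t ∈ V; (b) every nonzero vector lying in some member of D lies in exactly q members of D; (c) D spans W. (That is, D is a qDHO of rank n.) -/
/-!
Everything rests on one fact about the exterior algebra over a field: for `y ≠ 0`,
`x ∧ y = 0` iff `x ∈ F ∙ y`. A vector `(x, x ∧ s)` of `X(s)` lies in `X(t)` iff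
`x ∧ (s - t) = 0`. Hence `X(s) ∩ X(t)` is the line through `(s - t, (s - t) ∧ s)`, and
the members through `(x, x ∧ s)`, `x ≠ 0`, are the `X(s - c • x)` for `c ∈ F`. Since
`X(t) ≅ V` has dimension `n > 1`, distinct parameters give distinct members. Finally
`X(0) = V ⊕ 0` and `(0, x ∧ y) = (x, x ∧ y) - (x, 0)`, so the members span `V ⊕ Λ²V`.
-/

open ExteriorAlgebra

namespace ExteriorAlgebra

variable {F V : Type*} [Field F] [AddCommGroup V] [Module F V]

theorem ι_mul_ι_ne_zero_of_linearIndependent {x y : V} (h : LinearIndependent F ![x, y]) :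
    ι F x * ι F y ≠ 0 := by
  let s : Set.powersetCard (Fin 2) 2 := ⟨Finset.univ, by simp [Set.powersetCard]⟩
  have hs := (exteriorPower.ιMulti_family_linearIndependent_field (n := 2) h).ne_zero s
  rw [ne_eq, ← Submodule.coe_eq_zero, exteriorPower.ιMulti_family_apply_coe,
    ιMulti_family, ιMulti_apply] at hs
  -- `s` is the only 2-subset of `Fin 2`, and its wedge is `ι x * ι y`.
  generalize Set.powersetCard.ofFinEmbEquiv.symm s = e at hs
  have he : e 0 = 0 ∧ e 1 = 1 := by
    have := e.lt_iff_lt.2 (show (0 : Fin 2) < 1 by decide)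
    omega
  simpa [List.ofFn_succ, he] using hs

theorem ι_mul_ι_eq_zero_comm {x y : V} : ι F x * ι F y = 0 ↔ ι F y * ι F x = 0 := by
  rw [eq_neg_of_add_eq_zero_left (ι_add_mul_swap x y), neg_eq_zero]

theorem ι_mul_ι_eq_zero_iff {x y : V} (hy : y ≠ 0) : ι F x * ι F y = 0 ↔ x ∈ F ∙ y := by
  refine ⟨fun h => ?_, fun h => ?_⟩
  · by_contra hx
    have hyx : LinearIndependent F ![y, x] :=
      (LinearIndependent.pair_iff' hy).2 fun a ha => hx (Submodule.mem_span_singleton.2 ⟨a, ha⟩)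
    exact ι_mul_ι_ne_zero_of_linearIndependent hyx (ι_mul_ι_eq_zero_comm.1 h)
  · obtain ⟨c, rfl⟩ := Submodule.mem_span_singleton.1 h
    rw [map_smul, smul_mul_assoc, ι_sq_zero, smul_zero]

end ExteriorAlgebra

section WedgeGraph

variable (F : Type*) {V : Type*} [Field F] [AddCommGroup V] [Module F V]

/-- The member `X(t) = {(x, x ∧ t) : x ∈ V}` of the construction. -/
def wedgeGraph (t : V) : Submodule F (V × ExteriorAlgebra F V) :=
  LinearMap.range
    ((LinearMap.id : V →ₗ[F] V).prod ((LinearMap.mulRight F (ι F t)) ∘ₗ ι F))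

variable {F}

theorem mem_wedgeGraph {v : V × ExteriorAlgebra F V} {t : V} :
    v ∈ wedgeGraph F t ↔ ι F v.1 * ι F t = v.2 :=
  ⟨by rintro ⟨x, rfl⟩; rfl, fun h => ⟨v.1, Prod.ext rfl h⟩⟩

theorem mem_wedgeGraph_iff_of_mem {v : V × ExteriorAlgebra F V} {s t : V}
    (hs : v ∈ wedgeGraph F s) : v ∈ wedgeGraph F t ↔ ι F v.1 * ι F (s - t) = 0 := by
  rw [mem_wedgeGraph, ← mem_wedgeGraph.1 hs, map_sub, mul_sub, sub_eq_zero, eq_comm]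

theorem finrank_wedgeGraph (t : V) : Module.finrank F (wedgeGraph F t) = Module.finrank F V :=
  LinearMap.finrank_range_of_inj fun _ _ h => congrArg Prod.fst h

theorem wedgeGraph_inf_eq_span {s t : V} (hst : s ≠ t) :
    wedgeGraph F s ⊓ wedgeGraph F t = F ∙ (s - t, ι F (s - t) * ι F s) := by
  have hw : (s - t, ι F (s - t) * ι F s) ∈ wedgeGraph F s := mem_wedgeGraph.2 rfl
  refine le_antisymm ?_ ?_
  · rintro v ⟨hvs, hvt⟩
    obtain ⟨c, hc⟩ := Submodule.mem_span_singleton.1 <|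
      (ι_mul_ι_eq_zero_iff (sub_ne_zero.2 hst)).1 ((mem_wedgeGraph_iff_of_mem hvs).1 hvt)
    refine Submodule.mem_span_singleton.2 ⟨c, Prod.ext hc ?_⟩
    rw [← mem_wedgeGraph.1 hvs, ← hc, Prod.smul_snd, map_smul, smul_mul_assoc]
  · rw [Submodule.span_singleton_le_iff_mem]
    exact ⟨hw, (mem_wedgeGraph_iff_of_mem hw).2 (ι_sq_zero _)⟩

theorem finrank_wedgeGraph_inf {s t : V} (hst : s ≠ t) :
    Module.finrank F (wedgeGraph F s ⊓ wedgeGraph F t : Submodule F _) = 1 := by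
  rw [wedgeGraph_inf_eq_span hst]
  exact finrank_span_singleton fun h => sub_ne_zero.2 hst (congrArg Prod.fst h)

theorem wedgeGraph_injective (h : 1 < Module.finrank F V) :
    Function.Injective (wedgeGraph F (V := V)) := by
  intro s t hst
  by_contra hne
  have := finrank_wedgeGraph_inf (F := F) hne
  rw [hst, inf_idem, finrank_wedgeGraph] at this
  omega

theorem setOf_mem_wedgeGraph {v : V × ExteriorAlgebra F V} {s : V} (hs : v ∈ wedgeGraph F s)
    (hv : v.1 ≠ 0) : {t | v ∈ wedgeGraph F t} = Set.range fun c : F => s - c • v.1 := by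
  ext t
  rw [Set.mem_ofPred_eq, mem_wedgeGraph_iff_of_mem hs, ι_mul_ι_eq_zero_comm,
    ι_mul_ι_eq_zero_iff hv, Submodule.mem_span_singleton]
  exact exists_congr fun c => by rw [eq_sub_iff_add_eq, ← eq_sub_iff_add_eq', eq_comm]

theorem ncard_setOf_mem_wedgeGraph [Fintype F] {v : V × ExteriorAlgebra F V} {s : V}
    (hs : v ∈ wedgeGraph F s) (hv : v ≠ 0) :
    {t | v ∈ wedgeGraph F t}.ncard = Fintype.card F := by
  have hv₁ : v.1 ≠ 0 := fun h => hv <| Prod.ext h <| by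
    rw [← mem_wedgeGraph.1 hs, h, map_zero, zero_mul, Prod.snd_zero]
  rw [setOf_mem_wedgeGraph hs hv₁, Set.ncard_range_of_injective, Nat.card_eq_fintype_card]
  exact fun a b h => smul_left_injective F hv₁ (sub_right_injective h)

theorem iSup_wedgeGraph :
    ⨆ t : V, wedgeGraph F t =
      (⊤ : Submodule F V).prod (Submodule.span F {w | ∃ x y : V, w = ι F x * ι F y}) := by
  have hfst (x : V) : (x, 0) ∈ ⨆ t : V, wedgeGraph F t :=
    Submodule.mem_iSup_of_mem 0 (mem_wedgeGraph.2 (by rw [map_zero, mul_zero]))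
  have hsnd : Submodule.span F {w | ∃ x y : V, w = ι F x * ι F y} ≤
      (⨆ t : V, wedgeGraph F t).comap (LinearMap.inr F V _) := by
    rw [Submodule.span_le]
    rintro _ ⟨x, y, rfl⟩
    have hxy : (x, ι F x * ι F y) ∈ ⨆ t : V, wedgeGraph F t :=
      Submodule.mem_iSup_of_mem y (mem_wedgeGraph.2 rfl)
    simpa using sub_mem hxy (hfst x)
  refine le_antisymm (iSup_le fun t => ?_) fun v hv => ?_
  · rintro _ ⟨x, rfl⟩
    exact ⟨trivial, Submodule.subset_span ⟨x, t, rfl⟩⟩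
  · simpa using add_mem (hfst v.1) (hsnd hv.2)

end WedgeGraph

theorem huybrechts_qDHO_general
    (F : Type*) [Field F] [Fintype F]
    (V : Type*) [AddCommGroup V] [Module F V]
    (n : ℕ) (hn : Module.finrank F V = n) (h1 : 1 < n) :
    let ι := ExteriorAlgebra.ι F (M := V)
    let X : V → Submodule F (V × ExteriorAlgebra F V) := fun t =>
      LinearMap.range
        ((LinearMap.id : V →ₗ[F] V).prod ((LinearMap.mulRight F (ι t)) ∘ₗ ι))
    let Λ2 : Submodule F (ExteriorAlgebra F V) :=
      Submodule.span F {w | ∃ x y : V, w = ι x * ι y}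
    -- distinct parameters give distinct members,
    Function.Injective X ∧
    -- (a) two distinct members meet in dimension 1,
    (∀ s t : V, s ≠ t →
      Module.finrank F (X s ⊓ X t : Submodule F (V × ExteriorAlgebra F V)) = 1) ∧
    -- (b) every nonzero vector lying in some member lies in exactly `q` members,
    (∀ v : V × ExteriorAlgebra F V, v ≠ 0 → (∃ t, v ∈ X t) →
      {t : V | v ∈ X t}.ncard = Fintype.card F) ∧
    -- (c) the members span `V ⊕ Λ²V`.
    (⨆ t : V, X t) = Submodule.prod ⊤ Λ2 :=
  ⟨wedgeGraph_injective (hn ▸ h1), fun _ _ => finrank_wedgeGraph_inf,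
    fun _ hv ⟨_, hs⟩ => ncard_setOf_mem_wedgeGraph hs hv, iSup_wedgeGraph⟩

/-- Huybrechts-type construction: for `V = F_q^n` (`n > 1`), the subspaces
`X(t) = {(x, x ∧ t) : x ∈ V}` of `V ⊕ Λ²V` form a `q`DHO of rank `n`:
pairwise intersections are 1-dimensional, every nonzero vector of the union
lies in exactly `q` members, and the members span `V ⊕ Λ²V`. -/
theorem huybrechts_qDHO
    (F : Type*) [Field F] [Fintype F]
    (V : Type*) [AddCommGroup V] [Module F V] [FiniteDimensional F V]
    (n : ℕ) (hn : Module.finrank F V = n) (h1 : 1 < n) :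
    let ι := ExteriorAlgebra.ι F (M := V)
    let X : V → Submodule F (V × ExteriorAlgebra F V) := fun t =>
      LinearMap.range
        ((LinearMap.id : V →ₗ[F] V).prod ((LinearMap.mulRight F (ι t)) ∘ₗ ι))
    let Λ2 : Submodule F (ExteriorAlgebra F V) :=
      Submodule.span F {w | ∃ x y : V, w = ι x * ι y}
    -- distinct parameters give distinct members,
    Function.Injective X ∧
    -- (a) two distinct members meet in dimension 1,
    (∀ s t : V, s ≠ t →
      Module.finrank F (X s ⊓ X t : Submodule F (V × ExteriorAlgebra F V)) = 1) ∧
    -- (b) every nonzero vector lying in some member lies in exactly `q` members,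
    (∀ v : V × ExteriorAlgebra F V, v ≠ 0 → (∃ t, v ∈ X t) →
      {t : V | v ∈ X t}.ncard = Fintype.card F) ∧
    -- (c) the members span `V ⊕ Λ²V`.
    (⨆ t : V, X t) = Submodule.prod ⊤ Λ2 :=
  huybrechts_qDHO_general F V n hn h1
end
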